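/- arXiv:2404.14001 — 6 statements merged into one kernel-verified Lean document; each statement's English description precedes it below -/
import Mathlib

section
/- Let n ≥ 7 be odd and let g be the complex n-dimensional Lie algebra with basis e_1,…,e_n and nonzero brackets [e_1,e_i] = e_{i+1} for 2 ≤ i ≤ n−2 and [e_i,e_{n−i}] = (−1)^i e_n for 2 ≤ i ≤ (n−1)/2. If φ is a 1/2-derivation of g, then φ(e_n) = α e_n, where α is the coefficient of e_1 in φ(e_1). -/
/-!
Write `d k` for the coefficient of `e k` in `φ (e k)`. The 1/2-derivation identity applied to
`[e₁, e_k] = e_{k+1}` gives `d (k + 1) = (d 1 + d k) / 2`, so `d k - d 1` halves at each step;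
applied to `[e_i, e_{n-i}] = (-1)^i e_n` it gives `d n = (d i + d (n - i)) / 2` for all
`2 ≤ i ≤ n - 2`, and for `i = 3` it shows that `φ (e n)` is a multiple of `e n`. Comparing `i = 2`
with `i = 3` yields `d 2 = d (n - 3)`, which a halving sequence only allows if it is zero; hence
`d 2 = d 1`, then `d 3 = d (n - 3) = d 1` and `φ (e n) = d n • e n = d 1 • e n`.
-/

theorem eq_of_avg_step_of_eq {K : Type*} [Field K] [CharZero K] (c : ℕ → K) (a : K) {p q : ℕ}
    (hpq : p < q) (hstep : ∀ k, p ≤ k → k < q → c (k + 1) = 2⁻¹ * (a + c k))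
    (hcycle : c q = c p) : c p = a := by
  have hgeom : ∀ m, p + m ≤ q → (c (p + m) - a) * 2 ^ m = c p - a := by
    intro m hm
    induction m with
    | zero => simp
    | succ m ih =>
      rw [← add_assoc, hstep (p + m) (by omega) (by omega), ← ih (by omega)]
      ring
  have hpow : (2 : K) ^ (q - p) ≠ 1 := by
    rw [Ne, ← Nat.cast_ofNat, ← Nat.cast_pow, Nat.cast_eq_one, Nat.pow_eq_one]
    omega
  have h := hgeom (q - p) (by omega)
  rw [Nat.add_sub_cancel' hpq.le, hcycle] at h
  have : (c p - a) * (2 ^ (q - p) - 1) = 0 := by linear_combination h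
  rcases mul_eq_zero.mp this with h | h
  · exact sub_eq_zero.mp h
  · exact absurd (sub_eq_zero.mp h) hpow

namespace QuasiFiliform

section Coordinates

variable {R M N : Type*} [Semiring R] [AddCommMonoid M] [Module R M] [AddCommMonoid N]
  [Module R N] {n : ℕ} {e : ℕ → M} {b : Module.Basis (Fin n) R M}

/-- The coordinate along `e k = b ⟨k - 1, _⟩` in the paper's 1-based indexing, and `0` for
`k ∉ [1, n]`. -/
noncomputable def natCoord (b : Module.Basis (Fin n) R M) (k : ℕ) : M →ₗ[R] R :=
  if h : 1 ≤ k ∧ k ≤ n then b.coord ⟨k - 1, by omega⟩ else 0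

theorem natCoord_succ (b : Module.Basis (Fin n) R M) (i : Fin n) (x : M) :
    natCoord b (i.1 + 1) x = b.repr x i := by
  rw [natCoord, dif_pos (by omega)]
  rfl

theorem natCoord_e (hb : ∀ i : Fin n, e (i.1 + 1) = b i) {j : ℕ} (hj : 1 ≤ j) (hjn : j ≤ n)
    (k : ℕ) : natCoord b k (e j) = if k = j then 1 else 0 := by
  obtain ⟨i, rfl⟩ : ∃ i : Fin n, j = i.1 + 1 := ⟨⟨j - 1, by omega⟩, by simp; omega⟩
  by_cases hk : 1 ≤ k ∧ k ≤ n
  · obtain ⟨i', rfl⟩ : ∃ i' : Fin n, k = i'.1 + 1 := ⟨⟨k - 1, by omega⟩, by simp; omega⟩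
    rw [natCoord_succ, hb, b.repr_self, Finsupp.single_apply]
    simp [Fin.ext_iff, eq_comm]
  · rw [natCoord, dif_neg hk, if_neg (by omega), LinearMap.zero_apply]

theorem linearMap_ext_e (hb : ∀ i : Fin n, e (i.1 + 1) = b i) {f g : M →ₗ[R] N}
    (h : ∀ j, 1 ≤ j → j ≤ n → f (e j) = g (e j)) : f = g :=
  b.ext fun i => by rw [← hb i]; exact h _ (by omega) (by omega)

end Coordinates

section LieAlgebra

variable {K L : Type*} [Field K] [LieRing L] [LieAlgebra K L] {n : ℕ} {e : ℕ → L}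
  {b : Module.Basis (Fin n) K L} {φ : L →ₗ[K] L}

variable (K) in
def HasG1n1Brackets (n : ℕ) (e : ℕ → L) : Prop :=
  ∀ i j : ℕ, 1 ≤ i → i < j → j ≤ n →
    ⁅e i, e j⁆ =
      if i = 1 ∧ 2 ≤ j ∧ j ≤ n - 2 then e (j + 1)
      else if 2 ≤ i ∧ i + j = n then ((-1 : K) ^ i) • e n
      else 0

def IsHalfDerivation (φ : L →ₗ[K] L) : Prop :=
  ∀ x y : L, φ ⁅x, y⁆ = (2 : K)⁻¹ • (⁅φ x, y⁆ + ⁅x, φ y⁆)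

theorem neg_one_pow_sub_of_odd {n i : ℕ} (hodd : Odd n) (hi : i ≤ n) :
    (-1 : K) ^ (n - i) = -(-1) ^ i := by
  rcases Nat.even_or_odd i with hi' | hi'
  · rw [(Nat.Odd.sub_even hi hodd hi').neg_one_pow, hi'.neg_one_pow]
  · rw [(Nat.Odd.sub_odd hodd hi').neg_one_pow, hi'.neg_one_pow, neg_neg]

theorem lie_e_one_e (htab : HasG1n1Brackets K n e) {k : ℕ} (hk : 1 ≤ k) (hkn : k ≤ n) :
    ⁅e 1, e k⁆ = if 2 ≤ k ∧ k ≤ n - 2 then e (k + 1) else 0 := by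
  rcases hk.eq_or_lt with rfl | hk
  · rw [lie_self, if_neg (by omega)]
  · rw [htab 1 k le_rfl hk hkn]
    split_ifs <;> first | rfl | omega

theorem lie_e_e (htab : HasG1n1Brackets K n e) (hodd : Odd n) {j k : ℕ} (hj : 2 ≤ j)
    (hjn : j ≤ n - 2) (hk : 1 ≤ k) (hkn : k ≤ n) :
    ⁅e k, e j⁆ = (if k = 1 then e (j + 1) else 0) +
      if k + j = n then ((-1 : K) ^ k) • e n else 0 := by
  rcases lt_trichotomy k j with hkj | rfl | hjk
  · rw [htab k j hk hkj (by omega)]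
    split_ifs <;> first | omega | simp
  · obtain ⟨t, rfl⟩ := hodd
    rw [lie_self]
    split_ifs <;> first | omega | simp
  · rw [← lie_skew, htab j k (by omega) hjk hkn]
    split_ifs <;> try omega
    -- the table gives `-(-1) ^ j • e n`, which is `(-1) ^ k • e n` because `k + j = n` is odd
    · rw [show j = n - k by omega, neg_one_pow_sub_of_odd hodd hkn]
      simp
    · simp

theorem lie_e_right (htab : HasG1n1Brackets K n e) (hodd : Odd n)
    (hb : ∀ i : Fin n, e (i.1 + 1) = b i) {j : ℕ} (hj : 2 ≤ j) (hjn : j ≤ n - 2) (x : L) :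
    ⁅x, e j⁆ =
      natCoord b 1 x • e (j + 1) + ((-1 : K) ^ (n - j) * natCoord b (n - j) x) • e n := by
  have key : -(LieAlgebra.ad K L (e j) : L →ₗ[K] L) = (natCoord b 1).smulRight (e (j + 1)) +
      ((-1 : K) ^ (n - j) • natCoord b (n - j)).smulRight (e n) := by
    refine linearMap_ext_e hb fun k hk hkn => ?_
    simp only [LinearMap.neg_apply, LieAlgebra.ad_apply, lie_skew, LinearMap.add_apply,
      LinearMap.smulRight_apply, LinearMap.smul_apply, natCoord_e hb hk hkn,
      lie_e_e htab hodd hj hjn hk hkn]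
    split_ifs <;> (try subst_vars) <;> first | omega | simp
  simpa [lie_skew, mul_smul] using LinearMap.congr_fun key x

theorem natCoord_succ_lie_e_one (htab : HasG1n1Brackets K n e)
    (hb : ∀ i : Fin n, e (i.1 + 1) = b i) (m : ℕ) (y : L) :
    natCoord b (m + 1) ⁅e 1, y⁆ = if 2 ≤ m ∧ m ≤ n - 2 then natCoord b m y else 0 := by
  have key : natCoord b (m + 1) ∘ₗ (LieAlgebra.ad K L (e 1) : L →ₗ[K] L) =
      if 2 ≤ m ∧ m ≤ n - 2 then natCoord b m else 0 := by
    refine linearMap_ext_e hb fun k hk hkn => ?_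
    rw [LinearMap.comp_apply, LieAlgebra.ad_apply, lie_e_one_e htab hk hkn, DFunLike.ite_apply]
    split_ifs with hk' hm hm
    · rw [natCoord_e hb (by omega) (by omega), natCoord_e hb hk hkn]
      simp
    · rw [natCoord_e hb (by omega) (by omega), if_neg (by omega), LinearMap.zero_apply]
    · rw [map_zero, natCoord_e hb hk hkn, if_neg (by omega)]
    · rw [map_zero, LinearMap.zero_apply]
  have := LinearMap.congr_fun key y
  rwa [DFunLike.ite_apply, LinearMap.zero_apply] at this

noncomputable def diagCoeff (b : Module.Basis (Fin n) K L) (e : ℕ → L) (φ : L →ₗ[K] L)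
    (k : ℕ) : K :=
  natCoord b k (φ (e k))

theorem natCoord_one_half_deriv_e (htab : HasG1n1Brackets K n e) (hodd : Odd n)
    (hb : ∀ i : Fin n, e (i.1 + 1) = b i) (hφ : IsHalfDerivation φ) {j : ℕ} (hj : 3 ≤ j)
    (hjn : j ≤ n - 1) : natCoord b 1 (φ (e j)) = 0 := by
  obtain ⟨m, rfl⟩ : ∃ m, j = m + 1 := ⟨j - 1, by omega⟩
  have h := congrArg (natCoord b 1) (hφ (e 1) (e m))
  have h₀ : natCoord b 1 ⁅e 1, φ (e m)⁆ = 0 := by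
    simpa using natCoord_succ_lie_e_one htab hb 0 (φ (e m))
  rw [lie_e_one_e htab (by omega) (by omega), if_pos ⟨by omega, by omega⟩,
    lie_e_right htab hodd hb (by omega) (by omega)] at h
  simp only [map_smul, map_add, smul_eq_mul, natCoord_e hb (j := m + 1) (by omega) (by omega),
    natCoord_e hb (j := n) (by omega) le_rfl, h₀, if_neg (show 1 ≠ m + 1 by omega),
    if_neg (show 1 ≠ n by omega)] at h
  simpa using h

theorem diagCoeff_succ (htab : HasG1n1Brackets K n e) (hodd : Odd n)
    (hb : ∀ i : Fin n, e (i.1 + 1) = b i) (hφ : IsHalfDerivation φ) {m : ℕ} (hm : 2 ≤ m)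
    (hmn : m ≤ n - 2) :
    diagCoeff b e φ (m + 1) = 2⁻¹ * (diagCoeff b e φ 1 + diagCoeff b e φ m) := by
  have h := congrArg (natCoord b (m + 1)) (hφ (e 1) (e m))
  rw [lie_e_one_e htab (by omega) (by omega), if_pos ⟨hm, hmn⟩,
    lie_e_right htab hodd hb hm hmn] at h
  simp only [map_smul, map_add, smul_eq_mul, natCoord_e hb (j := m + 1) (by omega) (by omega),
    natCoord_e hb (j := n) (by omega) le_rfl, natCoord_succ_lie_e_one htab hb,
    if_pos (And.intro hm hmn)] at h
  simpa [diagCoeff, if_neg (show m + 1 ≠ n by omega)] using h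

theorem neg_one_pow_smul_half_deriv_e_n (htab : HasG1n1Brackets K n e) (hodd : Odd n)
    (hb : ∀ i : Fin n, e (i.1 + 1) = b i) (hφ : IsHalfDerivation φ) {i : ℕ} (hi : 2 ≤ i)
    (hin : i ≤ n - 2) :
    (-1 : K) ^ i • φ (e n) = (2 : K)⁻¹ • (natCoord b 1 (φ (e i)) • e (n - i + 1) -
      natCoord b 1 (φ (e (n - i))) • e (i + 1) +
      ((-1 : K) ^ i * (diagCoeff b e φ i + diagCoeff b e φ (n - i))) • e n) := by
  have hbr : ⁅e i, e (n - i)⁆ = (-1 : K) ^ i • e n := by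
    rw [lie_e_e htab hodd (by omega) (by omega) (by omega) (by omega), if_neg (by omega),
      if_pos (by omega), zero_add]
  have h := hφ (e i) (e (n - i))
  rw [hbr, map_smul, ← lie_skew (e i), lie_e_right htab hodd hb (by omega) (by omega),
    lie_e_right htab hodd hb hi hin, Nat.sub_sub_self (by omega),
    neg_one_pow_sub_of_odd hodd (by omega)] at h
  rw [h, diagCoeff, diagCoeff]
  module

theorem diagCoeff_n_eq_avg (htab : HasG1n1Brackets K n e) (hodd : Odd n)
    (hb : ∀ i : Fin n, e (i.1 + 1) = b i) (hφ : IsHalfDerivation φ) {i : ℕ} (hi : 2 ≤ i)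
    (hin : i ≤ n - 2) :
    diagCoeff b e φ n = 2⁻¹ * (diagCoeff b e φ i + diagCoeff b e φ (n - i)) := by
  have h := congrArg (natCoord b n) (neg_one_pow_smul_half_deriv_e_n htab hodd hb hφ hi hin)
  simp only [map_smul, map_add, map_sub, smul_eq_mul,
    natCoord_e hb (j := n - i + 1) (by omega) (by omega),
    natCoord_e hb (j := i + 1) (by omega) (by omega), natCoord_e hb (j := n) (by omega) le_rfl,
    if_neg (show n ≠ n - i + 1 by omega), if_neg (show n ≠ i + 1 by omega), ↓reduceIte] at h
  refine mul_left_cancel₀ (pow_ne_zero i (neg_ne_zero.mpr one_ne_zero)) ?_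
  rw [diagCoeff]
  linear_combination h

theorem half_deriv_e_n_eq_smul (htab : HasG1n1Brackets K n e) (hodd : Odd n) (hn : 6 ≤ n)
    (hb : ∀ i : Fin n, e (i.1 + 1) = b i) (hφ : IsHalfDerivation φ) :
    φ (e n) = diagCoeff b e φ n • e n := by
  have h := neg_one_pow_smul_half_deriv_e_n htab hodd hb hφ (i := 3) (by omega) (by omega)
  rw [natCoord_one_half_deriv_e htab hodd hb hφ le_rfl (by omega),
    natCoord_one_half_deriv_e htab hodd hb hφ (by omega) (by omega)] at h
  rw [diagCoeff_n_eq_avg htab hodd hb hφ (i := 3) (by omega) (by omega)]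
  refine smul_right_injective L (pow_ne_zero 3 (neg_ne_zero.mpr (one_ne_zero (α := K)))) ?_
  simp only [h]
  module

theorem diagCoeff_n_eq_diagCoeff_one [CharZero K] (htab : HasG1n1Brackets K n e)
    (hodd : Odd n) (hn : 6 ≤ n) (hb : ∀ i : Fin n, e (i.1 + 1) = b i) (hφ : IsHalfDerivation φ) :
    diagCoeff b e φ n = diagCoeff b e φ 1 := by
  have hstep : ∀ k, 2 ≤ k → k ≤ n - 2 →
      diagCoeff b e φ (k + 1) = 2⁻¹ * (diagCoeff b e φ 1 + diagCoeff b e φ k) :=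
    fun k hk hkn => diagCoeff_succ htab hodd hb hφ hk hkn
  have h₂ := diagCoeff_n_eq_avg htab hodd hb hφ (i := 2) le_rfl (by omega)
  have h₃ := diagCoeff_n_eq_avg htab hodd hb hφ (i := 3) (by omega) (by omega)
  have h₃' : diagCoeff b e φ 3 = _ := hstep 2 le_rfl (by omega)
  have hn₂ := hstep (n - 3) (by omega) (by omega)
  rw [show n - 3 + 1 = n - 2 by omega] at hn₂
  have hcycle : diagCoeff b e φ (n - 3) = diagCoeff b e φ 2 := by
    linear_combination 4 * h₂ - 4 * h₃ + 2 * hn₂ - 2 * h₃'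
  have hd₂ : diagCoeff b e φ 2 = diagCoeff b e φ 1 :=
    eq_of_avg_step_of_eq _ _ (by omega) (fun k hk hkq => hstep k hk (by omega)) hcycle
  rw [h₃, h₃', hcycle, hd₂]
  ring

end LieAlgebra

end QuasiFiliform

/-- For odd n ≥ 7, any 1/2-derivation of g^1_{(n,1)} satisfies φ(e_n) = α₁ e_n,
where α₁ is the coefficient of e_1 in φ(e_1). -/
theorem g1n1_half_derivation_en
    (n : ℕ) (hn : 7 ≤ n) (hodd : Odd n)
    (L : Type*) [LieRing L] [LieAlgebra ℂ L]
    (e : ℕ → L) (b : Module.Basis (Fin n) ℂ L)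
    (hb : ∀ i : Fin n, e (i.1 + 1) = b i)
    (htab : ∀ i j : ℕ, 1 ≤ i → i < j → j ≤ n →
      ⁅e i, e j⁆ =
        if i = 1 ∧ 2 ≤ j ∧ j ≤ n - 2 then e (j + 1)
        else if 2 ≤ i ∧ i + j = n then ((-1 : ℂ) ^ i) • e n
        else 0)
    (φ : L →ₗ[ℂ] L)
    (hφ : ∀ x y : L, φ ⁅x, y⁆ = (2 : ℂ)⁻¹ • (⁅φ x, y⁆ + ⁅x, φ y⁆)) :
    φ (e n) = (b.repr (φ (e 1)) ⟨0, by omega⟩) • e n := by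
  open QuasiFiliform in
  rw [half_deriv_e_n_eq_smul htab hodd (by omega) hb hφ,
    diagCoeff_n_eq_diagCoeff_one htab hodd (by omega) hb hφ, diagCoeff,
    ← natCoord_succ b ⟨0, _⟩]
end

section
/- Let g = g^1_{(5,1)} be the 5-dimensional complex Lie algebra with basis e_1,…,e_5 and nonzero brackets [e_1,e_2] = e_3, [e_1,e_3] = e_4, [e_2,e_3] = e_5. A linear map φ : g → g is a 1/2-derivation of g if and only if there exist scalars α_1,…,α_5, β_1,…,β_5 such that φ(e_1) = Σ α_i e_i, φ(e_2) = Σ β_i e_i, φ(e_3) = (1/2)(α_1+β_2)e_3 + (1/2)β_3 e_4 − (1/2)α_3 e_5, φ(e_4) = (1/4)(3α_1+β_2)e_4 + (1/2)α_2 e_5, φ(e_5) = (1/2)β_1 e_4 + (1/4)(α_1+3β_2)e_5. -/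
/-!
The 1/2-derivation identity is bilinear in `(x, y)` and changes sign when `x` and `y` are swapped,
so it suffices to check it on basis pairs `e i, e j` with `i < j`. Since `e 3 = ⁅e 1, e 2⁆`,
`e 4 = ⁅e 1, e 3⁆` and `e 5 = ⁅e 2, e 3⁆`, the pairs `(1,2)`, `(1,3)`, `(2,3)` force the values of
`φ` on `e 3`, `e 4`, `e 5` in terms of `φ (e 1)` and `φ (e 2)`; once these values are imposed, both
sides of the identity vanish on the remaining seven pairs, so `φ (e 1)` and `φ (e 2)` are free.
-/

open Finset

section DeltaDerivation

variable {R L : Type*} [CommRing R] [LieRing L] [LieAlgebra R L]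

def IsDeltaDerivation (δ : R) (φ : L →ₗ[R] L) : Prop :=
  ∀ x y : L, φ ⁅x, y⁆ = δ • (⁅φ x, y⁆ + ⁅x, φ y⁆)

def deltaDerivationDefect (δ : R) (φ : L →ₗ[R] L) : L →ₗ[R] L →ₗ[R] L :=
  LinearMap.mk₂ R (fun x y => φ ⁅x, y⁆ - δ • (⁅φ x, y⁆ + ⁅x, φ y⁆))
    (fun x x' y => by simp only [add_lie, map_add]; module)
    (fun c x y => by simp only [smul_lie, map_smul]; module)
    (fun x y y' => by simp only [lie_add, map_add]; module)
    (fun c x y => by simp only [lie_smul, map_smul]; module)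

lemma deltaDerivationDefect_apply (δ : R) (φ : L →ₗ[R] L) (x y : L) :
    deltaDerivationDefect δ φ x y = φ ⁅x, y⁆ - δ • (⁅φ x, y⁆ + ⁅x, φ y⁆) :=
  rfl

lemma deltaDerivationDefect_swap (δ : R) (φ : L →ₗ[R] L) (x y : L) :
    deltaDerivationDefect δ φ y x = -deltaDerivationDefect δ φ x y := by
  simp only [deltaDerivationDefect_apply, ← lie_skew x y, ← lie_skew (φ x), ← lie_skew x (φ y),
    map_neg]
  module

lemma isDeltaDerivation_iff_deltaDerivationDefect_eq_zero (δ : R) (φ : L →ₗ[R] L) :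
    IsDeltaDerivation δ φ ↔ deltaDerivationDefect δ φ = 0 := by
  simp only [IsDeltaDerivation, LinearMap.ext_iff, LinearMap.zero_apply,
    deltaDerivationDefect_apply, sub_eq_zero]

theorem isDeltaDerivation_iff_basis {ι : Type*} [LinearOrder ι] (b : Module.Basis ι R L)
    (δ : R) (φ : L →ₗ[R] L) :
    IsDeltaDerivation δ φ ↔
      ∀ i j, i < j → φ ⁅b i, b j⁆ = δ • (⁅φ (b i), b j⁆ + ⁅b i, φ (b j)⁆) := by
  refine ⟨fun h i j _ => h (b i) (b j), fun h => ?_⟩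
  have hij : ∀ i j, i < j → deltaDerivationDefect δ φ (b i) (b j) = 0 := fun i j hij => by
    rw [deltaDerivationDefect_apply, h i j hij, sub_self]
  rw [isDeltaDerivation_iff_deltaDerivationDefect_eq_zero]
  refine LinearMap.ext_basis b b fun i j => ?_
  rcases lt_trichotomy i j with hlt | rfl | hgt
  · exact hij i j hlt
  · rw [deltaDerivationDefect_apply, lie_self, map_zero, ← lie_skew (b i), add_neg_cancel,
      smul_zero, sub_self, LinearMap.zero_apply, LinearMap.zero_apply]
  · rw [deltaDerivationDefect_swap, hij j i hgt, neg_zero, LinearMap.zero_apply,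
      LinearMap.zero_apply]

end DeltaDerivation

lemma Module.Basis.exists_eq_sum_Icc_smul {R M : Type*} [Semiring R] [AddCommMonoid M]
    [Module R M] {n : ℕ} (b : Module.Basis (Fin n) R M) (e : ℕ → M)
    (hb : ∀ i : Fin n, e (i.1 + 1) = b i) (x : M) :
    ∃ c : ℕ → R, x = ∑ i ∈ Icc 1 n, c i • e i := by
  let c : ℕ → R := fun k => if h : k - 1 < n then b.repr x ⟨k - 1, h⟩ else 0
  refine ⟨c, ?_⟩
  calc x = ∑ i : Fin n, c (i + 1) • e (i + 1) := by simp [c, hb, b.sum_repr]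
    _ = ∑ i ∈ Icc 1 n, c i • e i := by
      rw [Fin.sum_univ_eq_sum_range (fun k => c (k + 1) • e (k + 1)), range_eq_Ico,
        sum_Ico_add' (fun k => c k • e k), Ico_add_one_right_eq_Icc, zero_add]

lemma sum_Icc_one_five {M : Type*} [AddCommMonoid M] (f : ℕ → M) :
    ∑ i ∈ Icc 1 5, f i = f 1 + f 2 + f 3 + f 4 + f 5 := by
  simp [sum_Icc_succ_top, add_assoc]

section G151

variable {K L : Type*} [Field K] [LieRing L] [LieAlgebra K L]

structure G151Brackets (e : ℕ → L) : Prop where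
  lie_one_two : ⁅e 1, e 2⁆ = e 3
  lie_one_three : ⁅e 1, e 3⁆ = e 4
  lie_two_three : ⁅e 2, e 3⁆ = e 5
  lie_one_four : ⁅e 1, e 4⁆ = 0
  lie_one_five : ⁅e 1, e 5⁆ = 0
  lie_two_four : ⁅e 2, e 4⁆ = 0
  lie_two_five : ⁅e 2, e 5⁆ = 0
  lie_three_four : ⁅e 3, e 4⁆ = 0
  lie_three_five : ⁅e 3, e 5⁆ = 0
  lie_four_five : ⁅e 4, e 5⁆ = 0

namespace G151Brackets

variable {e : ℕ → L}

theorem of_lie_eq_zero (h12 : ⁅e 1, e 2⁆ = e 3) (h13 : ⁅e 1, e 3⁆ = e 4)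
    (h23 : ⁅e 2, e 3⁆ = e 5)
    (hz : ∀ i j : ℕ, 1 ≤ i → i < j → j ≤ 5 →
      ¬(i = 1 ∧ j = 2) → ¬(i = 1 ∧ j = 3) → ¬(i = 2 ∧ j = 3) → ⁅e i, e j⁆ = 0) :
    G151Brackets e :=
  ⟨h12, h13, h23, by apply hz <;> decide, by apply hz <;> decide, by apply hz <;> decide,
    by apply hz <;> decide, by apply hz <;> decide, by apply hz <;> decide,
    by apply hz <;> decide⟩

variable (T : G151Brackets e)
include T

theorem lie_table :
    ⁅e 1, e 2⁆ = e 3 ∧ ⁅e 1, e 3⁆ = e 4 ∧ ⁅e 2, e 3⁆ = e 5 ∧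
    ⁅e 2, e 1⁆ = -e 3 ∧ ⁅e 3, e 1⁆ = -e 4 ∧ ⁅e 3, e 2⁆ = -e 5 ∧
    ⁅e 1, e 4⁆ = 0 ∧ ⁅e 1, e 5⁆ = 0 ∧ ⁅e 2, e 4⁆ = 0 ∧ ⁅e 2, e 5⁆ = 0 ∧
    ⁅e 3, e 4⁆ = 0 ∧ ⁅e 3, e 5⁆ = 0 ∧ ⁅e 4, e 5⁆ = 0 ∧
    ⁅e 4, e 1⁆ = 0 ∧ ⁅e 5, e 1⁆ = 0 ∧ ⁅e 4, e 2⁆ = 0 ∧ ⁅e 5, e 2⁆ = 0 ∧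
    ⁅e 4, e 3⁆ = 0 ∧ ⁅e 5, e 3⁆ = 0 ∧ ⁅e 5, e 4⁆ = 0 := by
  have swap : ∀ {x y z : L}, ⁅x, y⁆ = z → ⁅y, x⁆ = -z := fun h => by rw [← lie_skew, h]
  have swap0 : ∀ {x y : L}, ⁅x, y⁆ = 0 → ⁅y, x⁆ = 0 := fun h => by rw [swap h, neg_zero]
  exact ⟨T.lie_one_two, T.lie_one_three, T.lie_two_three, swap T.lie_one_two,
    swap T.lie_one_three, swap T.lie_two_three, T.lie_one_four, T.lie_one_five, T.lie_two_four,
    T.lie_two_five, T.lie_three_four, T.lie_three_five, T.lie_four_five, swap0 T.lie_one_four,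
    swap0 T.lie_one_five, swap0 T.lie_two_four, swap0 T.lie_two_five, swap0 T.lie_three_four,
    swap0 T.lie_three_five, swap0 T.lie_four_five⟩

theorem half_bracket_one_two (α β : ℕ → K) :
    (2 : K)⁻¹ • (⁅∑ i ∈ Icc 1 5, α i • e i, e 2⁆ + ⁅e 1, ∑ i ∈ Icc 1 5, β i • e i⁆) =
      ((1 / 2 : K) * (α 1 + β 2)) • e 3 + ((1 / 2 : K) * β 3) • e 4
        + (-(1 / 2 : K) * α 3) • e 5 := by
  simp only [sum_Icc_one_five, add_lie, lie_add, smul_lie, lie_smul, lie_self, T.lie_table,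
    smul_zero, smul_neg, add_zero, zero_add]
  module

variable [CharZero K]

theorem half_bracket_one_three (α β : ℕ → K) :
    (2 : K)⁻¹ • (⁅∑ i ∈ Icc 1 5, α i • e i, e 3⁆ +
        ⁅e 1, ((1 / 2 : K) * (α 1 + β 2)) • e 3 + ((1 / 2 : K) * β 3) • e 4
          + (-(1 / 2 : K) * α 3) • e 5⁆) =
      ((1 / 4 : K) * (3 * α 1 + β 2)) • e 4 + ((1 / 2 : K) * α 2) • e 5 := by
  simp only [sum_Icc_one_five, add_lie, lie_add, smul_lie, lie_smul, lie_self, T.lie_table,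
    smul_zero, add_zero]
  module

theorem half_bracket_two_three (α β : ℕ → K) :
    (2 : K)⁻¹ • (⁅∑ i ∈ Icc 1 5, β i • e i, e 3⁆ +
        ⁅e 2, ((1 / 2 : K) * (α 1 + β 2)) • e 3 + ((1 / 2 : K) * β 3) • e 4
          + (-(1 / 2 : K) * α 3) • e 5⁆) =
      ((1 / 2 : K) * β 1) • e 4 + ((1 / 4 : K) * (α 1 + 3 * β 2)) • e 5 := by
  simp only [sum_Icc_one_five, add_lie, lie_add, smul_lie, lie_smul, lie_self, T.lie_table,
    smul_zero, add_zero]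
  module

theorem isDeltaDerivation_of_apply_eq (b : Module.Basis (Fin 5) K L)
    (hb : ∀ i : Fin 5, e (i.1 + 1) = b i) (φ : L →ₗ[K] L) (α β : ℕ → K)
    (h1 : φ (e 1) = ∑ i ∈ Icc 1 5, α i • e i) (h2 : φ (e 2) = ∑ i ∈ Icc 1 5, β i • e i)
    (h3 : φ (e 3) = ((1 / 2 : K) * (α 1 + β 2)) • e 3 + ((1 / 2 : K) * β 3) • e 4
        + (-(1 / 2 : K) * α 3) • e 5)
    (h4 : φ (e 4) = ((1 / 4 : K) * (3 * α 1 + β 2)) • e 4 + ((1 / 2 : K) * α 2) • e 5)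
    (h5 : φ (e 5) = ((1 / 2 : K) * β 1) • e 4 + ((1 / 4 : K) * (α 1 + 3 * β 2)) • e 5) :
    IsDeltaDerivation (2 : K)⁻¹ φ := by
  rw [isDeltaDerivation_iff_basis b]
  intro i j hij
  simp only [← hb]
  fin_cases i <;> fin_cases j <;>
    simp only [Fin.zero_eta, Fin.mk_one, Fin.reduceFinMk, Fin.isValue, Fin.reduceLT,
      lt_self_iff_false, not_lt_zero, zero_add, Nat.reduceAdd] at hij ⊢ <;>
    simp only [T.lie_table, h1, h2, h3, h4, h5, sum_Icc_one_five, map_zero, add_lie, lie_add,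
      smul_lie, lie_smul, lie_self, smul_zero, smul_neg, add_zero, zero_add] <;>
    module

theorem apply_eq_of_isDeltaDerivation (φ : L →ₗ[K] L) (hφ : IsDeltaDerivation (2 : K)⁻¹ φ)
    (α β : ℕ → K) (h1 : φ (e 1) = ∑ i ∈ Icc 1 5, α i • e i)
    (h2 : φ (e 2) = ∑ i ∈ Icc 1 5, β i • e i) :
    φ (e 3) = ((1 / 2 : K) * (α 1 + β 2)) • e 3 + ((1 / 2 : K) * β 3) • e 4
        + (-(1 / 2 : K) * α 3) • e 5 ∧
      φ (e 4) = ((1 / 4 : K) * (3 * α 1 + β 2)) • e 4 + ((1 / 2 : K) * α 2) • e 5 ∧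
      φ (e 5) = ((1 / 2 : K) * β 1) • e 4 + ((1 / 4 : K) * (α 1 + 3 * β 2)) • e 5 := by
  have h3 := hφ (e 1) (e 2)
  rw [T.lie_one_two, h1, h2, T.half_bracket_one_two] at h3
  have h4 := hφ (e 1) (e 3)
  rw [T.lie_one_three, h1, h3, T.half_bracket_one_three] at h4
  have h5 := hφ (e 2) (e 3)
  rw [T.lie_two_three, h2, h3, T.half_bracket_two_three] at h5
  exact ⟨h3, h4, h5⟩

end G151Brackets

end G151

/-- Description of all 1/2-derivations of the 5-dimensional algebra g^1_{(5,1)}. -/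
theorem g151_half_derivations
    (L : Type*) [LieRing L] [LieAlgebra ℂ L]
    (e : ℕ → L) (b : Module.Basis (Fin 5) ℂ L)
    (hb : ∀ i : Fin 5, e (i.1 + 1) = b i)
    (h12 : ⁅e 1, e 2⁆ = e 3) (h13 : ⁅e 1, e 3⁆ = e 4) (h23 : ⁅e 2, e 3⁆ = e 5)
    (hz : ∀ i j : ℕ, 1 ≤ i → i < j → j ≤ 5 →
      ¬(i = 1 ∧ j = 2) → ¬(i = 1 ∧ j = 3) → ¬(i = 2 ∧ j = 3) → ⁅e i, e j⁆ = 0)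
    (φ : L →ₗ[ℂ] L) :
    (∀ x y : L, φ ⁅x, y⁆ = (2 : ℂ)⁻¹ • (⁅φ x, y⁆ + ⁅x, φ y⁆)) ↔
    (∃ α β : ℕ → ℂ,
      φ (e 1) = ∑ i ∈ Finset.Icc 1 5, α i • e i ∧
      φ (e 2) = ∑ i ∈ Finset.Icc 1 5, β i • e i ∧
      φ (e 3) = ((1 / 2 : ℂ) * (α 1 + β 2)) • e 3 + ((1 / 2 : ℂ) * β 3) • e 4
        + (-(1 / 2 : ℂ) * α 3) • e 5 ∧
      φ (e 4) = ((1 / 4 : ℂ) * (3 * α 1 + β 2)) • e 4 + ((1 / 2 : ℂ) * α 2) • e 5 ∧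
      φ (e 5) = ((1 / 2 : ℂ) * β 1) • e 4 + ((1 / 4 : ℂ) * (α 1 + 3 * β 2)) • e 5) := by
  have T := G151Brackets.of_lie_eq_zero h12 h13 h23 hz
  change IsDeltaDerivation (2 : ℂ)⁻¹ φ ↔ _
  constructor
  · intro hφ
    obtain ⟨α, h1⟩ := b.exists_eq_sum_Icc_smul e hb (φ (e 1))
    obtain ⟨β, h2⟩ := b.exists_eq_sum_Icc_smul e hb (φ (e 2))
    exact ⟨α, β, h1, h2, T.apply_eq_of_isDeltaDerivation φ hφ α β h1 h2⟩
  · rintro ⟨α, β, h1, h2, h3, h4, h5⟩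
    exact T.isDeltaDerivation_of_apply_eq b hb φ α β h1 h2 h3 h4 h5
end

section
/- Let g = g^1_7 be the 7-dimensional complex Lie algebra with basis e_1,…,e_7 and nonzero brackets [e_1,e_i] = e_{i+1} for 2 ≤ i ≤ 5, [e_2,e_3] = e_5, [e_2,e_4] = e_6, [e_2,e_5] = e_7, [e_3,e_4] = −e_7. Then every 1/2-derivation φ of g satisfies φ(e_6) = α_1 e_6 and φ(e_7) = α_1 e_7, where α_1 is the coefficient of e_1 in φ(e_1). -/
/-!
With `e_i` in degree `i` the bracket of `g^1_7` is graded. Write `φ(e_j) = ∑ a_{jk} e_k`. The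
identity `φ[x, y] = ½([φ x, y] + [x, φ y])` on `[e_1, e_2]`, `[e_1, e_3]`, `[e_1, e_4]` and `[e_2, e_3]`
determines the coefficients of `φ(e_3)`, `φ(e_4)`, `φ(e_5)` near the diagonal recursively. In degree `0`
it gives `a_33 = (a_11 + a_22)/2`, `a_44 = (a_11 + a_33)/2` and two expressions
`a_55 = (a_11 + a_44)/2 = (a_22 + a_33)/2`, which force `a_22 = a_55 = a_11`. In degree `1` the same
recursion, together with the two values of the `e_7`-coefficient of `φ(e_6)` coming from
`e_6 = [e_1, e_5] = [e_2, e_4]`, forces `a_12 = 0`. In negative degrees `a_21 = 0` and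
`φ(e_5) ∈ ⟨e_5, e_6, e_7⟩`. Substituting all this into `φ[e_1, e_5]` and `φ[e_2, e_5]` gives
`φ(e_6) = a_11 e_6` and `φ(e_7) = a_11 e_7`.
-/

open Matrix

/-- The bracket of `g^1_7` in coordinates: entry `i` is the coefficient of `e_{i+1}`. -/
def g17Lie (x y : Fin 7 → ℂ) : Fin 7 → ℂ :=
  ![0, 0, x 0 * y 1 - x 1 * y 0, x 0 * y 2 - x 2 * y 0,
    x 0 * y 3 - x 3 * y 0 + x 1 * y 2 - x 2 * y 1,
    x 0 * y 4 - x 4 * y 0 + x 1 * y 3 - x 3 * y 1,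
    x 1 * y 4 - x 4 * y 1 - x 2 * y 3 + x 3 * y 2]

theorem g17Lie_eq_sum (x y : Fin 7 → ℂ) :
    g17Lie x y = ∑ i, ∑ j, (x i * y j) • g17Lie (Pi.single i 1) (Pi.single j 1) := by
  ext k
  fin_cases k <;> simp [g17Lie, Fin.sum_univ_seven] <;> ring

/-- `M` is the matrix of a 1/2-derivation of `g^1_7`; as for `LinearMap.toMatrix`, `M k j` is the
coefficient of `e_{k+1}` in `φ(e_{j+1})`. -/
def IsG17HalfDerivation (M : Matrix (Fin 7) (Fin 7) ℂ) : Prop :=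
  ∀ u v, M *ᵥ g17Lie u v = (2 : ℂ)⁻¹ • (g17Lie (M *ᵥ u) v + g17Lie u (M *ᵥ v))

section Coordinates

variable {L : Type*} [LieRing L] [LieAlgebra ℂ L]

theorem equivFun_lie_basis_eq_g17Lie (e : ℕ → L) (b : Module.Basis (Fin 7) ℂ L)
    (hb : ∀ i : Fin 7, e (i.1 + 1) = b i)
    (h1 : ∀ i : ℕ, 2 ≤ i → i ≤ 5 → ⁅e 1, e i⁆ = e (i + 1))
    (h23 : ⁅e 2, e 3⁆ = e 5) (h24 : ⁅e 2, e 4⁆ = e 6)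
    (h25 : ⁅e 2, e 5⁆ = e 7) (h34 : ⁅e 3, e 4⁆ = -e 7)
    (hz : ∀ i j : ℕ, 1 ≤ i → i < j → j ≤ 7 →
      ((i, j) ∉ ({(1, 2), (1, 3), (1, 4), (1, 5), (2, 3), (2, 4), (2, 5), (3, 4)}
        : Set (ℕ × ℕ))) → ⁅e i, e j⁆ = 0) (i j : Fin 7) :
    b.equivFun ⁅b i, b j⁆ = g17Lie (Pi.single i 1) (Pi.single j 1) := by
  rw [← LinearEquiv.eq_symm_apply]
  simp only [Module.Basis.equivFun_symm_apply, Fin.sum_univ_seven, ← hb]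
  fin_cases i <;> fin_cases j <;> simp [g17Lie, h1, hz, h23, h24, h25, h34, ← lie_skew]

theorem equivFun_lie_eq_g17Lie (b : Module.Basis (Fin 7) ℂ L)
    (hb : ∀ i j, b.equivFun ⁅b i, b j⁆ = g17Lie (Pi.single i 1) (Pi.single j 1)) (x y : L) :
    b.equivFun ⁅x, y⁆ = g17Lie (b.equivFun x) (b.equivFun y) := by
  conv_lhs => rw [← b.sum_equivFun x, ← b.sum_equivFun y]
  simp only [sum_lie, lie_sum, smul_lie, lie_smul, map_sum, map_smul, hb,
    g17Lie_eq_sum (b.equivFun x)]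
  rw [Finset.sum_comm]
  simp only [Finset.smul_sum, smul_smul, mul_comm]

theorem isG17HalfDerivation_toMatrix (b : Module.Basis (Fin 7) ℂ L)
    (hlie : ∀ x y : L, b.equivFun ⁅x, y⁆ = g17Lie (b.equivFun x) (b.equivFun y))
    (φ : L →ₗ[ℂ] L) (hφ : ∀ x y : L, φ ⁅x, y⁆ = (2 : ℂ)⁻¹ • (⁅φ x, y⁆ + ⁅x, φ y⁆)) :
    IsG17HalfDerivation (LinearMap.toMatrix b b φ) := by
  have hM (z : L) : LinearMap.toMatrix b b φ *ᵥ b.equivFun z = b.equivFun (φ z) :=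
    LinearMap.toMatrix_mulVec_repr b b φ z
  intro u v
  obtain ⟨x, rfl⟩ := b.equivFun.surjective u
  obtain ⟨y, rfl⟩ := b.equivFun.surjective v
  rw [← hlie, hM, hM, hM, hφ, map_smul, map_add, hlie, hlie]

end Coordinates

namespace IsG17HalfDerivation

variable {M : Matrix (Fin 7) (Fin 7) ℂ}

theorem entries_neg_degree_eq_zero (hM : IsG17HalfDerivation M) :
    M 0 1 = 0 ∧ M 0 4 = 0 ∧ M 1 4 = 0 ∧ M 2 4 = 0 ∧ M 3 4 = 0 := by
  have h12 := hM (Pi.single 0 1) (Pi.single 1 1)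
  have h13 := hM (Pi.single 0 1) (Pi.single 2 1)
  have h14 := hM (Pi.single 0 1) (Pi.single 3 1)
  have h23 := hM (Pi.single 1 1) (Pi.single 2 1)
  simp [funext_iff, Fin.forall_fin_succ, g17Lie, mulVec, dotProduct, Fin.sum_univ_seven]
    at h12 h13 h14 h23
  obtain ⟨-, h12, -⟩ := h12
  obtain ⟨-, h13, h23', -⟩ := h13
  obtain ⟨h04, h14, h24, h34, -⟩ := h14
  obtain ⟨-, -, -, h34', -⟩ := h23
  have h34_zero : M 3 4 = 0 := by linear_combination h34 + (1 / 2 : ℂ) * h23' + (1 / 4 : ℂ) * h12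
  exact ⟨by linear_combination 2 * h34_zero - 2 * h34', h04, h14,
    by linear_combination h24 + (1 / 2 : ℂ) * h13, h34_zero⟩

theorem diag_eq (hM : IsG17HalfDerivation M) : M 1 1 = M 0 0 ∧ M 4 4 = M 0 0 := by
  have h12 := hM (Pi.single 0 1) (Pi.single 1 1)
  have h13 := hM (Pi.single 0 1) (Pi.single 2 1)
  have h14 := hM (Pi.single 0 1) (Pi.single 3 1)
  have h23 := hM (Pi.single 1 1) (Pi.single 2 1)
  simp [funext_iff, Fin.forall_fin_succ, g17Lie, mulVec, dotProduct, Fin.sum_univ_seven]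
    at h12 h13 h14 h23
  obtain ⟨-, -, h22, -⟩ := h12
  obtain ⟨-, -, -, h33, -⟩ := h13
  obtain ⟨-, -, -, -, h44, -⟩ := h14
  obtain ⟨-, -, -, -, h44', -⟩ := h23
  have h11 : M 1 1 = M 0 0 := by
    linear_combination (-2 / 5 : ℂ) * h22 + (4 / 5 : ℂ) * h33 + (8 / 5 : ℂ) * h44
      - (8 / 5 : ℂ) * h44'
  exact ⟨h11, by linear_combination h44 + (1 / 2 : ℂ) * h33 + (1 / 4 : ℂ) * h22 + (1 / 8 : ℂ) * h11⟩

theorem entry_one_zero_eq_zero (hM : IsG17HalfDerivation M) : M 1 0 = 0 := by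
  have h12 := hM (Pi.single 0 1) (Pi.single 1 1)
  have h13 := hM (Pi.single 0 1) (Pi.single 2 1)
  have h14 := hM (Pi.single 0 1) (Pi.single 3 1)
  have h23 := hM (Pi.single 1 1) (Pi.single 2 1)
  have h15 := hM (Pi.single 0 1) (Pi.single 4 1)
  have h24 := hM (Pi.single 1 1) (Pi.single 3 1)
  simp [funext_iff, Fin.forall_fin_succ, g17Lie, mulVec, dotProduct, Fin.sum_univ_seven]
    at h12 h13 h14 h23 h15 h24
  obtain ⟨-, -, -, h32, -⟩ := h12
  obtain ⟨-, -, -, -, h43, -⟩ := h13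
  obtain ⟨-, -, -, -, -, h54, -⟩ := h14
  obtain ⟨-, -, -, -, -, h54', -⟩ := h23
  obtain ⟨-, -, -, -, -, -, h65⟩ := h15
  obtain ⟨-, -, -, -, -, -, h65'⟩ := h24
  linear_combination (2 / 5 : ℂ) * h32 - (2 / 5 : ℂ) * h43 - (6 / 5 : ℂ) * h54
    + (6 / 5 : ℂ) * h54' - (2 / 5 : ℂ) * h65 + (2 / 5 : ℂ) * h65'

theorem mulVec_single_five_six (hM : IsG17HalfDerivation M) :
    M *ᵥ Pi.single 5 1 = M 0 0 • Pi.single 5 1 ∧ M *ᵥ Pi.single 6 1 = M 0 0 • Pi.single 6 1 := by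
  obtain ⟨h01, h04, h14, h24, h34⟩ := hM.entries_neg_degree_eq_zero
  obtain ⟨h11, h44⟩ := hM.diag_eq
  have h10 := hM.entry_one_zero_eq_zero
  have h16 := hM (Pi.single 0 1) (Pi.single 4 1)
  have h17 := hM (Pi.single 1 1) (Pi.single 4 1)
  simp [funext_iff, Fin.forall_fin_succ, g17Lie, mulVec, dotProduct, Fin.sum_univ_seven]
    at h16 h17 ⊢
  simp only [h01, h04, h14, h24, h34, h11, h44, h10] at h16 h17
  simp only [h16, h17]
  norm_num
  ring

end IsG17HalfDerivation

theorem Module.Basis.apply_eq_smul_of_toMatrix_mulVec_single {R M ι : Type*} [CommSemiring R]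
    [AddCommMonoid M] [Module R M] [Fintype ι] [DecidableEq ι] (b : Module.Basis ι R M)
    (f : M →ₗ[R] M) {j : ι} {c : R}
    (h : LinearMap.toMatrix b b f *ᵥ Pi.single j 1 = c • Pi.single j 1) : f (b j) = c • b j := by
  have hsingle : b.equivFun (b j) = Pi.single j 1 := by simp [Finsupp.single_eq_pi_single]
  apply b.equivFun.injective
  calc b.equivFun (f (b j)) = LinearMap.toMatrix b b f *ᵥ b.equivFun (b j) :=
        (LinearMap.toMatrix_mulVec_repr b b f (b j)).symm
    _ = b.equivFun (c • b j) := by rw [hsingle, h, map_smul, hsingle]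

/-- Every 1/2-derivation of g^1_7 satisfies φ(e_6) = α₁ e_6 and φ(e_7) = α₁ e_7,
where α₁ is the coefficient of e_1 in φ(e_1). -/
theorem g17_half_derivation_top
    (L : Type*) [LieRing L] [LieAlgebra ℂ L]
    (e : ℕ → L) (b : Module.Basis (Fin 7) ℂ L)
    (hb : ∀ i : Fin 7, e (i.1 + 1) = b i)
    (h1 : ∀ i : ℕ, 2 ≤ i → i ≤ 5 → ⁅e 1, e i⁆ = e (i + 1))
    (h23 : ⁅e 2, e 3⁆ = e 5) (h24 : ⁅e 2, e 4⁆ = e 6)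
    (h25 : ⁅e 2, e 5⁆ = e 7) (h34 : ⁅e 3, e 4⁆ = -e 7)
    (hz : ∀ i j : ℕ, 1 ≤ i → i < j → j ≤ 7 →
      ((i, j) ∉ ({(1, 2), (1, 3), (1, 4), (1, 5), (2, 3), (2, 4), (2, 5), (3, 4)}
        : Set (ℕ × ℕ))) → ⁅e i, e j⁆ = 0)
    (φ : L →ₗ[ℂ] L)
    (hφ : ∀ x y : L, φ ⁅x, y⁆ = (2 : ℂ)⁻¹ • (⁅φ x, y⁆ + ⁅x, φ y⁆)) :
    φ (e 6) = (b.repr (φ (e 1)) ⟨0, by omega⟩) • e 6 ∧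
    φ (e 7) = (b.repr (φ (e 1)) ⟨0, by omega⟩) • e 7 := by
  have hM : IsG17HalfDerivation (LinearMap.toMatrix b b φ) :=
    isG17HalfDerivation_toMatrix b
      (equivFun_lie_eq_g17Lie b (equivFun_lie_basis_eq_g17Lie e b hb h1 h23 h24 h25 h34 hz)) φ hφ
  obtain ⟨h6, h7⟩ := hM.mulVec_single_five_six
  rw [LinearMap.toMatrix_apply] at h6 h7
  rw [show e 1 = b 0 from hb 0, show e 6 = b 5 from hb 5, show e 7 = b 6 from hb 6]
  exact ⟨b.apply_eq_smul_of_toMatrix_mulVec_single φ h6,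
    b.apply_eq_smul_of_toMatrix_mulVec_single φ h7⟩
end

section
/- Let g = g^1_{(5,1)} be the 5-dimensional complex Lie algebra with nonzero brackets [e_1,e_2]=e_3, [e_1,e_3]=e_4, [e_2,e_3]=e_5. Define a commutative bilinear multiplication · on g by e_1·e_1 = α_4 e_4 + α_5 e_5, e_1·e_2 = β_4 e_4 + β_5 e_5, e_2·e_2 = γ_4 e_4 + γ_5 e_5 (all other products of basis elements zero), for arbitrary scalars α_4, α_5, β_4, β_5, γ_4, γ_5. Then (g, ·, [-,-]) is a transposed Poisson algebra. -/
/-!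
Products land in `span {e₄, e₅}`, which is central, and brackets land in `span {e₃, e₄, e₅}`,
which the multiplication annihilates. Hence every triple product vanishes and both sides of the
associativity and transposed Leibniz identities are zero.
-/

open Submodule

theorem LinearMap.apply_mem_of_apply_basis_mem {R M P ι : Type*} [CommRing R] [AddCommGroup M]
    [Module R M] [AddCommGroup P] [Module R P] (b : Module.Basis ι R M) (f : M →ₗ[R] P)
    {S : Submodule R P} (h : ∀ i, f (b i) ∈ S) (x : M) : f x ∈ S := by
  have hspan : map f (span R (Set.range b)) ≤ S :=
    (map_span_le f _ S).mpr (by rintro _ ⟨i, rfl⟩; exact h i)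
  rw [b.span_eq] at hspan
  exact hspan ⟨x, trivial, rfl⟩

theorem LinearMap.apply₂_mem_of_apply_basis_mem {R M N P ι κ : Type*} [CommRing R]
    [AddCommGroup M] [Module R M] [AddCommGroup N] [Module R N] [AddCommGroup P] [Module R P]
    (b : Module.Basis ι R M) (c : Module.Basis κ R N) (f : M →ₗ[R] N →ₗ[R] P)
    {S : Submodule R P} (h : ∀ i j, f (b i) (c j) ∈ S) (x : M) (y : N) : f x y ∈ S :=
  (f x).apply_mem_of_apply_basis_mem c
    (fun j => (f.flip (c j)).apply_mem_of_apply_basis_mem b (fun i => h i j) x) y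

theorem LinearMap.apply₂_eq_zero_of_mem_span {R M N P ι : Type*} [CommRing R]
    [AddCommGroup M] [Module R M] [AddCommGroup N] [Module R N] [AddCommGroup P] [Module R P]
    (b : Module.Basis ι R M) (f : M →ₗ[R] N →ₗ[R] P) {s : Set N}
    (h : ∀ i, ∀ y ∈ s, f (b i) y = 0) (x : M) {y : N} (hy : y ∈ span R s) : f x y = 0 :=
  LinearMap.eqOn_span' (g := 0) (fun y hy => (mem_bot R).mp <|
    (f.flip y).apply_mem_of_apply_basis_mem b (fun i => (mem_bot R).mpr (h i y hy)) x) hy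

section TransposedPoisson

variable {R L : Type*} [CommRing R] [LieRing L] [LieAlgebra R L]

def IsTransposedPoisson (m : L →ₗ[R] L →ₗ[R] L) : Prop :=
  (∀ x y : L, m x y = m y x) ∧
  (∀ x y z : L, m (m x y) z = m x (m y z)) ∧
  (∀ x y z : L, (2 : R) • m z ⁅x, y⁆ = ⁅m z x, y⁆ + ⁅x, m z y⁆)

theorem isTransposedPoisson_of_annihilates {m : L →ₗ[R] L →ₗ[R] L} {I : Submodule R L}
    (hcomm : ∀ x y : L, m x y = m y x) (hlie : ∀ x y : L, ⁅x, y⁆ ∈ I)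
    (hmul : ∀ x y : L, m x y ∈ I) (hann : ∀ x, ∀ w ∈ I, m x w = 0)
    (hcentral : ∀ x y z : L, ⁅z, m x y⁆ = 0) : IsTransposedPoisson m := by
  refine ⟨hcomm, fun x y z => ?_, fun x y z => ?_⟩
  · rw [hcomm, hann z _ (hmul x y), hann x _ (hmul y z)]
  · rw [hann z _ (hlie x y), ← lie_skew, hcentral, hcentral, smul_zero, neg_zero, add_zero]

end TransposedPoisson

section G151

variable {R L : Type*} [CommRing R] [LieRing L] [LieAlgebra R L] {e : ℕ → L}

theorem lie_mem_span_of_lt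
    (h12 : ⁅e 1, e 2⁆ = e 3) (h13 : ⁅e 1, e 3⁆ = e 4) (h23 : ⁅e 2, e 3⁆ = e 5)
    (hz : ∀ i j : ℕ, 1 ≤ i → i < j → j ≤ 5 →
      ((i, j) ∉ ({(1, 2), (1, 3), (2, 3)} : Set (ℕ × ℕ))) → ⁅e i, e j⁆ = 0)
    {i j : ℕ} (hi : 1 ≤ i) (hij : i < j) (hj : j ≤ 5) :
    ⁅e i, e j⁆ ∈ span R {e 3, e 4, e 5} := by
  by_cases hgen : (i, j) ∈ ({(1, 2), (1, 3), (2, 3)} : Set (ℕ × ℕ))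
  · simp only [Set.mem_insert_iff, Set.mem_singleton_iff, Prod.mk.injEq] at hgen
    rcases hgen with ⟨rfl, rfl⟩ | ⟨rfl, rfl⟩ | ⟨rfl, rfl⟩
    · exact h12 ▸ subset_span (by simp)
    · exact h13 ▸ subset_span (by simp)
    · exact h23 ▸ subset_span (by simp)
  · exact hz i j hi hij hj hgen ▸ zero_mem _

theorem lie_mem_span
    (h12 : ⁅e 1, e 2⁆ = e 3) (h13 : ⁅e 1, e 3⁆ = e 4) (h23 : ⁅e 2, e 3⁆ = e 5)
    (hz : ∀ i j : ℕ, 1 ≤ i → i < j → j ≤ 5 →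
      ((i, j) ∉ ({(1, 2), (1, 3), (2, 3)} : Set (ℕ × ℕ))) → ⁅e i, e j⁆ = 0)
    {i j : ℕ} (hi : 1 ≤ i) (hi5 : i ≤ 5) (hj : 1 ≤ j) (hj5 : j ≤ 5) :
    ⁅e i, e j⁆ ∈ span R {e 3, e 4, e 5} := by
  rcases lt_trichotomy i j with hij | rfl | hji
  · exact lie_mem_span_of_lt h12 h13 h23 hz hi hij hj5
  · exact lie_self (e i) ▸ zero_mem _
  · rw [← lie_skew]
    exact neg_mem (lie_mem_span_of_lt h12 h13 h23 hz hj hji hi5)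

theorem lie_eq_zero_of_four_le
    (hz : ∀ i j : ℕ, 1 ≤ i → i < j → j ≤ 5 →
      ((i, j) ∉ ({(1, 2), (1, 3), (2, 3)} : Set (ℕ × ℕ))) → ⁅e i, e j⁆ = 0)
    {i j : ℕ} (hi : 1 ≤ i) (hi5 : i ≤ 5) (hj : 4 ≤ j) (hj5 : j ≤ 5) : ⁅e i, e j⁆ = 0 := by
  rcases lt_trichotomy i j with hij | rfl | hji
  · exact hz i j hi hij hj5 (by
      simp only [Set.mem_insert_iff, Set.mem_singleton_iff, Prod.mk.injEq]; omega)
  · exact lie_self _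
  · rw [← lie_skew, hz j i (by omega) hji hi5 (by
      simp only [Set.mem_insert_iff, Set.mem_singleton_iff, Prod.mk.injEq]; omega), neg_zero]

variable {m : L →ₗ[R] L →ₗ[R] L}

theorem mul_mem_span_of_le {α₄ α₅ β₄ β₅ γ₄ γ₅ : R}
    (m11 : m (e 1) (e 1) = α₄ • e 4 + α₅ • e 5)
    (m12 : m (e 1) (e 2) = β₄ • e 4 + β₅ • e 5)
    (m22 : m (e 2) (e 2) = γ₄ • e 4 + γ₅ • e 5)
    (mz : ∀ i j : ℕ, 1 ≤ i → i ≤ j → j ≤ 5 →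
      ((i, j) ∉ ({(1, 1), (1, 2), (2, 2)} : Set (ℕ × ℕ))) → m (e i) (e j) = 0)
    {i j : ℕ} (hi : 1 ≤ i) (hij : i ≤ j) (hj : j ≤ 5) : m (e i) (e j) ∈ span R {e 4, e 5} := by
  have hcomb : ∀ a b : R, a • e 4 + b • e 5 ∈ span R {e 4, e 5} := fun a b =>
    add_mem (smul_mem _ a (subset_span (by simp))) (smul_mem _ b (subset_span (by simp)))
  by_cases hgen : (i, j) ∈ ({(1, 1), (1, 2), (2, 2)} : Set (ℕ × ℕ))
  · simp only [Set.mem_insert_iff, Set.mem_singleton_iff, Prod.mk.injEq] at hgen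
    rcases hgen with ⟨rfl, rfl⟩ | ⟨rfl, rfl⟩ | ⟨rfl, rfl⟩
    · exact m11 ▸ hcomb _ _
    · exact m12 ▸ hcomb _ _
    · exact m22 ▸ hcomb _ _
  · exact mz i j hi hij hj hgen ▸ zero_mem _

theorem mul_mem_span {α₄ α₅ β₄ β₅ γ₄ γ₅ : R} (hcomm : ∀ x y : L, m x y = m y x)
    (m11 : m (e 1) (e 1) = α₄ • e 4 + α₅ • e 5)
    (m12 : m (e 1) (e 2) = β₄ • e 4 + β₅ • e 5)
    (m22 : m (e 2) (e 2) = γ₄ • e 4 + γ₅ • e 5)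
    (mz : ∀ i j : ℕ, 1 ≤ i → i ≤ j → j ≤ 5 →
      ((i, j) ∉ ({(1, 1), (1, 2), (2, 2)} : Set (ℕ × ℕ))) → m (e i) (e j) = 0)
    {i j : ℕ} (hi : 1 ≤ i) (hi5 : i ≤ 5) (hj : 1 ≤ j) (hj5 : j ≤ 5) :
    m (e i) (e j) ∈ span R {e 4, e 5} := by
  rcases le_total i j with hij | hji
  · exact mul_mem_span_of_le m11 m12 m22 mz hi hij hj5
  · exact hcomm (e j) (e i) ▸ mul_mem_span_of_le m11 m12 m22 mz hj hji hi5

theorem mul_eq_zero_of_three_le (hcomm : ∀ x y : L, m x y = m y x)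
    (mz : ∀ i j : ℕ, 1 ≤ i → i ≤ j → j ≤ 5 →
      ((i, j) ∉ ({(1, 1), (1, 2), (2, 2)} : Set (ℕ × ℕ))) → m (e i) (e j) = 0)
    {i j : ℕ} (hi : 1 ≤ i) (hi5 : i ≤ 5) (hj : 3 ≤ j) (hj5 : j ≤ 5) : m (e i) (e j) = 0 := by
  rcases le_total i j with hij | hji
  · exact mz i j hi hij hj5 (by
      simp only [Set.mem_insert_iff, Set.mem_singleton_iff, Prod.mk.injEq]; omega)
  · rw [hcomm]
    exact mz j i (by omega) hji hi5 (by
      simp only [Set.mem_insert_iff, Set.mem_singleton_iff, Prod.mk.injEq]; omega)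

end G151

/-- The multiplication TP_1(g^1_{(5,1)}) makes g^1_{(5,1)} a transposed Poisson algebra. -/
theorem tp1_g151
    (L : Type*) [LieRing L] [LieAlgebra ℂ L]
    (e : ℕ → L) (b : Module.Basis (Fin 5) ℂ L)
    (hb : ∀ i : Fin 5, e (i.1 + 1) = b i)
    (h12 : ⁅e 1, e 2⁆ = e 3) (h13 : ⁅e 1, e 3⁆ = e 4) (h23 : ⁅e 2, e 3⁆ = e 5)
    (hz : ∀ i j : ℕ, 1 ≤ i → i < j → j ≤ 5 →
      ((i, j) ∉ ({(1, 2), (1, 3), (2, 3)} : Set (ℕ × ℕ))) → ⁅e i, e j⁆ = 0)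
    (α₄ α₅ β₄ β₅ γ₄ γ₅ : ℂ)
    (m : L →ₗ[ℂ] L →ₗ[ℂ] L)
    (hcomm : ∀ x y : L, m x y = m y x)
    (m11 : m (e 1) (e 1) = α₄ • e 4 + α₅ • e 5)
    (m12 : m (e 1) (e 2) = β₄ • e 4 + β₅ • e 5)
    (m22 : m (e 2) (e 2) = γ₄ • e 4 + γ₅ • e 5)
    (mz : ∀ i j : ℕ, 1 ≤ i → i ≤ j → j ≤ 5 →
      ((i, j) ∉ ({(1, 1), (1, 2), (2, 2)} : Set (ℕ × ℕ))) → m (e i) (e j) = 0) :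
    (∀ x y : L, m x y = m y x) ∧
    (∀ x y z : L, m (m x y) z = m x (m y z)) ∧
    (∀ x y z : L, (2 : ℂ) • m z ⁅x, y⁆ = ⁅m z x, y⁆ + ⁅x, m z y⁆) := by
  have hb' (i : Fin 5) : b i = e (i.1 + 1) := (hb i).symm
  have hlie (x y : L) : ⁅x, y⁆ ∈ span ℂ {e 3, e 4, e 5} :=
    (LieModule.toEnd ℂ L L : L →ₗ[ℂ] L →ₗ[ℂ] L).apply₂_mem_of_apply_basis_mem b b
      (fun i j => by
        simpa [hb'] using lie_mem_span h12 h13 h23 hz (i := i.1 + 1) (j := j.1 + 1)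
          (by omega) (by omega) (by omega) (by omega)) x y
  have hmul (x y : L) : m x y ∈ span ℂ {e 4, e 5} :=
    m.apply₂_mem_of_apply_basis_mem b b (fun i j => hb' i ▸ hb' j ▸
      mul_mem_span hcomm m11 m12 m22 mz (by omega) (by omega) (by omega) (by omega)) x y
  have hann (x : L) : ∀ w ∈ span ℂ {e 3, e 4, e 5}, m x w = 0 :=
    fun _ => m.apply₂_eq_zero_of_mem_span b (fun i => by
      rintro _ (rfl | rfl | rfl) <;>
      exact hb' i ▸ mul_eq_zero_of_three_le hcomm mz (by omega) (by omega) (by norm_num)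
        (by norm_num)) x
  have hcentral (x : L) : ∀ w ∈ span ℂ {e 4, e 5}, ⁅x, w⁆ = 0 :=
    fun _ => (LieModule.toEnd ℂ L L : L →ₗ[ℂ] L →ₗ[ℂ] L).apply₂_eq_zero_of_mem_span b
      (fun i => by
        rintro _ (rfl | rfl) <;>
        simpa [hb'] using lie_eq_zero_of_four_le hz (i := i.1 + 1) (by omega) (by omega)
          (by norm_num) (by norm_num)) x
  exact isTransposedPoisson_of_annihilates hcomm hlie
    (fun x y => span_mono (by simp) (hmul x y)) hann (fun x y z => hcentral z _ (hmul x y))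
end

section
/- Let n ≥ 7 be odd and g = g^1_{(n,1)} the complex Lie algebra with nonzero brackets [e_1,e_i]=e_{i+1} (2≤i≤n−2), [e_i,e_{n−i}]=(−1)^i e_n (2≤i≤(n−1)/2). Define a commutative multiplication · by e_1·e_1 = e_2 + Σ_{j=3}^{n} α_j e_j, e_1·e_2 = 2β_1 e_{n−1} + β_2 e_n, e_1·e_3 = −(1/2)α_{n−2} e_n, e_1·e_j = ((−1)^j/2)α_{n−j+1} e_n for 4 ≤ j ≤ n−2, e_1·e_{n−1} = (1/2)e_n, e_2·e_2 = β_1 e_n, and all other products of basis elements zero. Then (g, ·, [-,-]) is a transposed Poisson algebra (it is the algebra TP_3(g^1_{(n,1)})). -/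
/-!
Both identities are trilinear, so it suffices to check them on basis vectors. Every product
`e p · e q` other than `e 1 · e 1` lies in `span {e (n - 1), e n}`, which is central in the Lie
algebra and is annihilated by `e 2, …, e n`. Hence a triple product `(e p · e q) · e r` vanishes
unless `{p, q, r} = {1, 1, 2}`, where it is `β₁ e n`; being symmetric in `p, q, r`, this gives
associativity. The same facts kill every term of the transposed Poisson identity except in the
case `z = x = e 1`, `y = e q`, where both sides are multiples of `e n`: the coefficients of
`e 1 · e j` are matched to the brackets `⁅e (n - q), e q⁆ = ± e n`, and the signs agree because
`n` is odd.
-/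

section Multilinear

variable {ι R M : Type*} [CommRing R]

theorem LinearMap.assoc_of_basis [AddCommGroup M] [Module R M] (b : Module.Basis ι R M)
    (m : M →ₗ[R] M →ₗ[R] M) (h : ∀ i j k, m (m (b i) (b j)) (b k) = m (b i) (m (b j) (b k)))
    (x y z : M) : m (m x y) z = m x (m y z) := by
  have : m.compr₂ m = (LinearMap.llcomp R M M M ∘ₗ m).compl₂ m :=
    LinearMap.ext_basis b b fun i j => b.ext fun k => by simpa using h i j k
  simpa using congr($this x y z)

theorem LinearMap.transposedPoisson_of_basis [LieRing M] [LieAlgebra R M]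
    (b : Module.Basis ι R M) (m : M →ₗ[R] M →ₗ[R] M)
    (h : ∀ i j k, (2 : R) • m (b k) ⁅b i, b j⁆ = ⁅m (b k) (b i), b j⁆ + ⁅b i, m (b k) (b j)⁆)
    (x y z : M) : (2 : R) • m z ⁅x, y⁆ = ⁅m z x, y⁆ + ⁅x, m z y⁆ := by
  let B : M →ₗ[R] M →ₗ[R] M := LinearMap.mk₂ R (fun x y => ⁅x, y⁆) add_lie smul_lie lie_add lie_smul
  have : (2 : R) • (LinearMap.llcomp R M M M ∘ₗ m).compl₂ B =
      m.compr₂ B + ((LinearMap.llcomp R M M M).flip ∘ₗ m).compl₂ B :=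
    LinearMap.ext_basis b b fun k i => b.ext fun j => by simpa [B] using h i j k
  simpa [B] using congr($this z x y)

end Multilinear

open Finset

theorem neg_one_pow_sub_of_odd {R : Type*} [Ring R] {n q : ℕ} (hodd : Odd n) (hq : q ≤ n) :
    (-1 : R) ^ (n - q) = (-1) ^ (q + 1) := by
  obtain ⟨k, rfl⟩ := hodd
  rw [neg_one_pow_eq_pow_mod_two, neg_one_pow_eq_pow_mod_two (n := q + 1)]
  congr 1
  omega

section

variable {K L : Type*} [Field K]

variable (K) in
structure IsG1n1Table [LieRing L] [LieAlgebra K L] (n : ℕ) (e : ℕ → L) : Prop where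
  lie_eq : ∀ i j : ℕ, 1 ≤ i → i < j → j ≤ n →
    ⁅e i, e j⁆ =
      if i = 1 ∧ 2 ≤ j ∧ j ≤ n - 2 then e (j + 1)
      else if 2 ≤ i ∧ i + j = n then ((-1 : K) ^ i) • e n
      else 0

namespace IsG1n1Table

variable [LieRing L] [LieAlgebra K L] {n : ℕ} {e : ℕ → L} (h : IsG1n1Table K n e)
include h

theorem lie_top {i : ℕ} (hi : 1 ≤ i) (hin : i ≤ n) : ⁅e i, e n⁆ = 0 := by
  rcases hin.lt_or_eq with hin | rfl
  · rw [h.lie_eq i n hi hin le_rfl, if_neg (by omega), if_neg (by omega)]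
  · exact lie_self _

theorem lie_pred_top (hn : 2 ≤ n) {i : ℕ} (hi : 1 ≤ i) (hin : i ≤ n) : ⁅e i, e (n - 1)⁆ = 0 := by
  rcases lt_trichotomy i (n - 1) with hlt | rfl | hgt
  · rw [h.lie_eq i (n - 1) hi hlt (by omega), if_neg (by omega), if_neg (by omega)]
  · exact lie_self _
  · rw [show i = n by omega, ← lie_skew, h.lie_top (by omega) (by omega), neg_zero]

theorem first_lie {q : ℕ} (hq : 2 ≤ q) (hqn : q ≤ n) :
    ⁅e 1, e q⁆ = if q ≤ n - 2 then e (q + 1) else 0 := by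
  rw [h.lie_eq 1 q le_rfl (by omega) hqn]
  simp [hq]

theorem lie_of_two_le (hodd : Odd n) {p q : ℕ} (hp : 2 ≤ p) (hpn : p ≤ n) (hq : 2 ≤ q)
    (hqn : q ≤ n) : ⁅e p, e q⁆ = if p + q = n then ((-1 : K) ^ p) • e n else 0 := by
  rcases lt_trichotomy p q with hlt | rfl | hgt
  · rw [h.lie_eq p q (by omega) hlt hqn, if_neg (by omega)]
    simp [hp]
  · have : p + p ≠ n := fun h' => Nat.not_odd_iff_even.mpr ⟨p, h'.symm⟩ hodd
    rw [lie_self, if_neg this]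
  · rw [← lie_skew, h.lie_eq q p (by omega) hgt hpn, if_neg (by omega)]
    by_cases hpq : p + q = n
    · have hsign : (-1 : K) ^ p = -(-1) ^ q := by
        rw [show p = n - q by omega, neg_one_pow_sub_of_odd hodd hqn, pow_succ, mul_neg_one]
      rw [if_pos ⟨hq, by omega⟩, if_pos hpq, hsign, neg_smul]
    · rw [if_neg (by omega), if_neg hpq, neg_zero]

end IsG1n1Table

structure IsTP3Mul [AddCommGroup L] [Module K L] (n : ℕ) (e : ℕ → L) (α : ℕ → K) (β₁ β₂ : K)
    (m : L →ₗ[K] L →ₗ[K] L) : Prop where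
  comm : ∀ x y : L, m x y = m y x
  first_first : m (e 1) (e 1) = e 2 + ∑ j ∈ Finset.Icc 3 n, α j • e j
  first_two : m (e 1) (e 2) = (2 * β₁) • e (n - 1) + β₂ • e n
  first_three : m (e 1) (e 3) = (-(1 / 2 : K) * α (n - 2)) • e n
  first_mid : ∀ j : ℕ, 4 ≤ j → j ≤ n - 2 →
    m (e 1) (e j) = ((-1 : K) ^ j * (1 / 2 : K) * α (n - j + 1)) • e n
  first_pred_top : m (e 1) (e (n - 1)) = (1 / 2 : K) • e n
  two_two : m (e 2) (e 2) = β₁ • e n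
  eq_zero : ∀ i j : ℕ, 1 ≤ i → i ≤ j → j ≤ n →
    ¬(i = 1 ∧ j ≤ n - 1) → ¬(i = 2 ∧ j = 2) → ¬(i = 1 ∧ j = n) → m (e i) (e j) = 0
  first_top : m (e 1) (e n) = 0

-- The coefficient of `e j` in `e 1 · e 1`, for `2 ≤ j ≤ n`.
def tp3Coeff (α : ℕ → K) (j : ℕ) : K := if j = 2 then 1 else α j

namespace IsTP3Mul

variable [AddCommGroup L] [Module K L] {n : ℕ} {e : ℕ → L} {α : ℕ → K} {β₁ β₂ : K}
  {m : L →ₗ[K] L →ₗ[K] L} (hm : IsTP3Mul n e α β₁ β₂ m)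
include hm

theorem mul_top (hn : 3 ≤ n) {p : ℕ} (hp : 1 ≤ p) (hpn : p ≤ n) : m (e p) (e n) = 0 := by
  by_cases hp1 : p = 1
  · exact hp1 ▸ hm.first_top
  · exact hm.eq_zero p n hp hpn le_rfl (by omega) (by omega) (by omega)

theorem mul_of_two_le {p q : ℕ} (hp : 2 ≤ p) (hpn : p ≤ n) (hq : 2 ≤ q) (hqn : q ≤ n) :
    m (e p) (e q) = if p + q = 4 then β₁ • e n else 0 := by
  split_ifs with hpq
  · obtain ⟨rfl, rfl⟩ : p = 2 ∧ q = 2 := by omega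
    exact hm.two_two
  rcases le_total p q with hle | hle
  · exact hm.eq_zero p q (by omega) hle hqn (by omega) (by omega) (by omega)
  · rw [hm.comm]
    exact hm.eq_zero q p (by omega) hle hpn (by omega) (by omega) (by omega)

theorem mul_pred_top (hn : 4 ≤ n) {p : ℕ} (hp : 1 ≤ p) (hpn : p ≤ n) :
    m (e p) (e (n - 1)) = if p = 1 then (1 / 2 : K) • e n else 0 := by
  split_ifs with hp1
  · exact hp1 ▸ hm.first_pred_top
  · rw [hm.mul_of_two_le (by omega) hpn (by omega) (by omega), if_neg (by omega)]

theorem exists_mul_first {q : ℕ} (hq : 2 ≤ q) (hqn : q ≤ n) :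
    ∃ d : K, m (e 1) (e q) = (if q = 2 then 2 * β₁ else 0) • e (n - 1) + d • e n := by
  by_cases hq2 : q = 2
  · exact ⟨β₂, by rw [if_pos hq2, hq2, hm.first_two]⟩
  simp only [if_neg hq2, zero_smul, zero_add]
  by_cases hq3 : q = 3
  · exact ⟨_, hq3 ▸ hm.first_three⟩
  by_cases hqmid : q ≤ n - 2
  · exact ⟨_, hm.first_mid q (by omega) hqmid⟩
  by_cases hq1 : q = n - 1
  · exact ⟨_, hq1 ▸ hm.first_pred_top⟩
  · exact ⟨0, by rw [show q = n by omega, hm.first_top, zero_smul]⟩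

theorem exists_mul_eq {p q : ℕ} (hp : 1 ≤ p) (hpn : p ≤ n) (hq : 1 ≤ q) (hqn : q ≤ n)
    (hpq : ¬(p = 1 ∧ q = 1)) : ∃ c d : K, m (e p) (e q) = c • e (n - 1) + d • e n := by
  by_cases hp1 : p = 1
  · subst hp1
    obtain ⟨d, hd⟩ := hm.exists_mul_first (q := q) (by omega) hqn
    exact ⟨_, d, hd⟩
  by_cases hq1 : q = 1
  · obtain ⟨d, hd⟩ := hm.exists_mul_first (q := p) (by omega) hpn
    exact ⟨_, d, by rw [hm.comm, hq1, hd]⟩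
  rw [hm.mul_of_two_le (by omega) hpn (by omega) hqn]
  split_ifs
  · exact ⟨0, β₁, by rw [zero_smul, zero_add]⟩
  · exact ⟨0, 0, by rw [zero_smul, zero_smul, zero_add]⟩

theorem mul_first_first_eq_sum (hn : 2 ≤ n) :
    m (e 1) (e 1) = ∑ j ∈ Icc 2 n, tp3Coeff α j • e j := by
  rw [← add_sum_Ioc_eq_sum_Icc hn, ← Icc_add_one_left_eq_Ioc, hm.first_first, tp3Coeff, if_pos rfl,
    one_smul]
  congr 1
  refine sum_congr rfl fun j hj => ?_
  rw [tp3Coeff, if_neg (by simp only [mem_Icc] at hj; omega)]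

theorem mul_mul_eq_ite [NeZero (2 : K)] (hn : 4 ≤ n) {p q r : ℕ} (hp : 1 ≤ p) (hpn : p ≤ n)
    (hq : 1 ≤ q) (hqn : q ≤ n) (hr : 1 ≤ r) (hrn : r ≤ n) (hpqr : 4 ≤ p + q + r) :
    m (m (e p) (e q)) (e r) = if p + q + r = 4 then β₁ • e n else 0 := by
  have top_mul : m (e n) (e r) = 0 := by rw [hm.comm, hm.mul_top (by omega) hr hrn]
  have one_mul_mul_eq_ite : ∀ q, 2 ≤ q → q ≤ n →
      m (m (e 1) (e q)) (e r) = if 1 + q + r = 4 then β₁ • e n else 0 := by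
    intro q hq hqn
    obtain ⟨d, hd⟩ := hm.exists_mul_first hq hqn
    rw [hd, map_add, map_smul, map_smul, LinearMap.add_apply, LinearMap.smul_apply,
      LinearMap.smul_apply, top_mul, smul_zero, add_zero, hm.comm, hm.mul_pred_top hn hr hrn]
    by_cases hqr : q = 2 ∧ r = 1
    · rw [if_pos hqr.1, if_pos hqr.2, if_pos (by omega), smul_smul, mul_right_comm,
        mul_one_div_cancel two_ne_zero, one_mul]
    · rw [if_neg (show 1 + q + r ≠ 4 by omega)]
      by_cases hq2 : q = 2
      · rw [if_neg (show r ≠ 1 by omega), smul_zero]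
      · rw [if_neg hq2, zero_smul]
  rcases (by omega : 2 ≤ p ∧ 2 ≤ q ∨ p = 1 ∧ 2 ≤ q ∨ 2 ≤ p ∧ q = 1 ∨ p = 1 ∧ q = 1) with
    ⟨hp2, hq2⟩ | ⟨rfl, hq2⟩ | ⟨hp2, rfl⟩ | ⟨rfl, rfl⟩
  · rw [if_neg (by omega), hm.mul_of_two_le hp2 hpn hq2 hqn]
    split_ifs <;> simp only [map_smul, LinearMap.smul_apply, top_mul, smul_zero, map_zero,
      LinearMap.zero_apply]
  · exact one_mul_mul_eq_ite q hq2 hqn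
  · rw [hm.comm (e p), one_mul_mul_eq_ite p hp2 hpn, add_comm 1 p]
  · rw [hm.first_first, map_add, map_sum, LinearMap.add_apply, LinearMap.sum_apply, sum_eq_zero,
      add_zero, hm.mul_of_two_le le_rfl (by omega) (by omega) hrn]
    intro j hj
    rw [mem_Icc] at hj
    rw [map_smul, LinearMap.smul_apply, hm.mul_of_two_le (by omega) hj.2 (by omega) hrn,
      if_neg (by omega), smul_zero]

theorem mul_assoc_basis [NeZero (2 : K)] (hn : 4 ≤ n) {p q r : ℕ} (hp : 1 ≤ p) (hpn : p ≤ n)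
    (hq : 1 ≤ q) (hqn : q ≤ n) (hr : 1 ≤ r) (hrn : r ≤ n) :
    m (m (e p) (e q)) (e r) = m (e p) (m (e q) (e r)) := by
  rw [hm.comm (e p) (m (e q) (e r))]
  by_cases h1 : p + q + r = 3
  · obtain ⟨rfl, rfl, rfl⟩ : p = 1 ∧ q = 1 ∧ r = 1 := by omega
    rfl
  · rw [hm.mul_mul_eq_ite hn hp hpn hq hqn hr hrn (by omega),
      hm.mul_mul_eq_ite hn hq hqn hr hrn hp hpn (by omega), show q + r + p = p + q + r by omega]

theorem two_smul_mul_first [NeZero (2 : K)] (hodd : Odd n) (hn : 5 ≤ n) {j : ℕ} (hj : 3 ≤ j)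
    (hjn : j ≤ n - 1) :
    (2 : K) • m (e 1) (e j) = ((-1 : K) ^ j * tp3Coeff α (n - j + 1)) • e n := by
  have two_mul_half : (2 : K) * (1 / 2) = 1 := mul_one_div_cancel two_ne_zero
  by_cases hjtop : j = n - 1
  · rw [hjtop, hm.first_pred_top, smul_smul, two_mul_half, show n - (n - 1) + 1 = 2 by omega,
      tp3Coeff, if_pos rfl, neg_one_pow_sub_of_odd hodd (by omega : 1 ≤ n)]
    norm_num
  rw [tp3Coeff, if_neg (show n - j + 1 ≠ 2 by omega)]
  by_cases hj3 : j = 3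
  · rw [hj3, hm.first_three, smul_smul, show n - 3 + 1 = n - 2 by omega]
    congr 1
    linear_combination (-α (n - 2)) * two_mul_half
  · rw [hm.first_mid j (by omega) (by omega), smul_smul]
    congr 1
    linear_combination ((-1 : K) ^ j * α (n - j + 1)) * two_mul_half

end IsTP3Mul

namespace IsTP3Mul

variable [LieRing L] [LieAlgebra K L] {n : ℕ} {e : ℕ → L} {α : ℕ → K} {β₁ β₂ : K}
  {m : L →ₗ[K] L →ₗ[K] L} (hm : IsTP3Mul n e α β₁ β₂ m) (hL : IsG1n1Table K n e)
include hm hL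

theorem lie_mul_eq_zero (hn : 2 ≤ n) {r p q : ℕ} (hr : 1 ≤ r) (hrn : r ≤ n) (hp : 1 ≤ p)
    (hpn : p ≤ n) (hq : 1 ≤ q) (hqn : q ≤ n) (hrp : ¬(r = 1 ∧ p = 1)) :
    ⁅m (e r) (e p), e q⁆ = 0 := by
  obtain ⟨c, d, hcd⟩ := hm.exists_mul_eq hr hrn hp hpn hrp
  rw [hcd, add_lie, smul_lie, smul_lie, ← lie_skew, hL.lie_pred_top hn hq hqn,
    ← lie_skew (e n), hL.lie_top hq hqn, neg_zero, smul_zero, smul_zero, add_zero]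

theorem mul_lie_eq_zero (hodd : Odd n) (hn : 3 ≤ n) {r p q : ℕ} (hr : 1 ≤ r) (hrn : r ≤ n)
    (hp : 1 ≤ p) (hpq : p < q) (hqn : q ≤ n) (h : 2 ≤ r ∨ 2 ≤ p) :
    m (e r) ⁅e p, e q⁆ = 0 := by
  by_cases hp1 : p = 1
  · subst hp1
    rw [hL.first_lie (by omega) hqn]
    split_ifs
    · rw [hm.mul_of_two_le (by omega) hrn (by omega) (by omega), if_neg (by omega)]
    · rw [map_zero]
  · rw [hL.lie_of_two_le hodd (by omega) (by omega) (by omega) hqn]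
    split_ifs
    · rw [map_smul, hm.mul_top hn hr hrn, smul_zero]
    · rw [map_zero]

theorem lie_mul_first_first (hodd : Odd n) {q : ℕ} (hq : 2 ≤ q) (hqn : q ≤ n) :
    ⁅m (e 1) (e 1), e q⁆ =
      if q + 2 ≤ n then ((-1 : K) ^ (n - q) * tp3Coeff α (n - q)) • e n else 0 := by
  have term : ∀ j ∈ Icc 2 n, ⁅tp3Coeff α j • e j, e q⁆ =
      if j = n - q then ((-1 : K) ^ (n - q) * tp3Coeff α (n - q)) • e n else 0 := by
    intro j hj
    rw [mem_Icc] at hj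
    rw [smul_lie, hL.lie_of_two_le hodd hj.1 hj.2 hq hqn]
    by_cases hjq : j = n - q
    · subst hjq
      rw [if_pos (by omega), if_pos rfl, smul_smul, mul_comm]
    · rw [if_neg (show j + q ≠ n by omega), if_neg hjq, smul_zero]
  rw [hm.mul_first_first_eq_sum (by omega), sum_lie, sum_congr rfl term, sum_ite_eq']
  congr 1
  simp only [mem_Icc, eq_iff_iff]
  omega

theorem two_smul_mul_first_lie_first [NeZero (2 : K)] (hodd : Odd n) (hn : 5 ≤ n) {q : ℕ}
    (hq : 2 ≤ q) (hqn : q ≤ n) :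
    (2 : K) • m (e 1) ⁅e 1, e q⁆ = ⁅m (e 1) (e 1), e q⁆ := by
  rw [hL.first_lie hq hqn, hm.lie_mul_first_first hL hodd hq hqn]
  by_cases hqtop : q ≤ n - 2
  · rw [if_pos hqtop, if_pos (by omega), hm.two_smul_mul_first hodd hn (by omega) (by omega),
      show n - (q + 1) + 1 = n - q by omega, neg_one_pow_sub_of_odd hodd hqn]
  · rw [if_neg hqtop, if_neg (by omega), map_zero, smul_zero]

theorem transposedPoisson_basis_of_lt [NeZero (2 : K)] (hodd : Odd n) (hn : 5 ≤ n) {r p q : ℕ}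
    (hr : 1 ≤ r) (hrn : r ≤ n) (hp : 1 ≤ p) (hpq : p < q) (hqn : q ≤ n) :
    (2 : K) • m (e r) ⁅e p, e q⁆ = ⁅m (e r) (e p), e q⁆ + ⁅e p, m (e r) (e q)⁆ := by
  rw [← lie_skew (e p) (m (e r) (e q)),
    hm.lie_mul_eq_zero hL (by omega) hr hrn (by omega) hqn hp (by omega) (by omega), neg_zero,
    add_zero]
  by_cases h11 : r = 1 ∧ p = 1
  · obtain ⟨rfl, rfl⟩ := h11
    exact hm.two_smul_mul_first_lie_first hL hodd hn (by omega) hqn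
  · rw [hm.mul_lie_eq_zero hL hodd (by omega) hr hrn hp hpq hqn (by omega),
      hm.lie_mul_eq_zero hL (by omega) hr hrn hp (by omega) (by omega) hqn h11, smul_zero]

theorem transposedPoisson_basis [NeZero (2 : K)] (hodd : Odd n) (hn : 5 ≤ n) {r p q : ℕ}
    (hr : 1 ≤ r) (hrn : r ≤ n) (hp : 1 ≤ p) (hpn : p ≤ n) (hq : 1 ≤ q) (hqn : q ≤ n) :
    (2 : K) • m (e r) ⁅e p, e q⁆ = ⁅m (e r) (e p), e q⁆ + ⁅e p, m (e r) (e q)⁆ := by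
  rcases lt_trichotomy p q with hpq | rfl | hqp
  · exact hm.transposedPoisson_basis_of_lt hL hodd hn hr hrn hp hpq hqn
  · rw [lie_self, map_zero, smul_zero, ← lie_skew (e p), add_neg_cancel]
  · rw [← lie_skew (e p) (e q), ← lie_skew (m (e r) (e p)) (e q),
      ← lie_skew (e p) (m (e r) (e q)), map_neg, smul_neg,
      hm.transposedPoisson_basis_of_lt hL hodd hn hr hrn hq hqp hpn]
    abel

end IsTP3Mul

end

/-- The multiplication TP_3(g^1_{(n,1)}) makes g^1_{(n,1)} (n ≥ 7 odd) a transposed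
Poisson algebra. -/
theorem tp3_g1n1
    (n : ℕ) (hn : 7 ≤ n) (hodd : Odd n)
    (L : Type*) [LieRing L] [LieAlgebra ℂ L]
    (e : ℕ → L) (b : Module.Basis (Fin n) ℂ L)
    (hb : ∀ i : Fin n, e (i.1 + 1) = b i)
    (htab : ∀ i j : ℕ, 1 ≤ i → i < j → j ≤ n →
      ⁅e i, e j⁆ =
        if i = 1 ∧ 2 ≤ j ∧ j ≤ n - 2 then e (j + 1)
        else if 2 ≤ i ∧ i + j = n then ((-1 : ℂ) ^ i) • e n
        else 0)
    (α : ℕ → ℂ) (β₁ β₂ : ℂ)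
    (m : L →ₗ[ℂ] L →ₗ[ℂ] L)
    (hcomm : ∀ x y : L, m x y = m y x)
    (m11 : m (e 1) (e 1) = e 2 + ∑ j ∈ Finset.Icc 3 n, α j • e j)
    (m12 : m (e 1) (e 2) = (2 * β₁) • e (n - 1) + β₂ • e n)
    (m13 : m (e 1) (e 3) = (-(1 / 2 : ℂ) * α (n - 2)) • e n)
    (m1j : ∀ j : ℕ, 4 ≤ j → j ≤ n - 2 →
      m (e 1) (e j) = ((-1 : ℂ) ^ j * (1 / 2 : ℂ) * α (n - j + 1)) • e n)
    (m1n1 : m (e 1) (e (n - 1)) = (1 / 2 : ℂ) • e n)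
    (m22 : m (e 2) (e 2) = β₁ • e n)
    (mz : ∀ i j : ℕ, 1 ≤ i → i ≤ j → j ≤ n →
      ¬(i = 1 ∧ j ≤ n - 1) → ¬(i = 2 ∧ j = 2) → ¬(i = 1 ∧ j = n) →
        m (e i) (e j) = 0)
    (m1n : m (e 1) (e n) = 0) :
    (∀ x y : L, m x y = m y x) ∧
    (∀ x y z : L, m (m x y) z = m x (m y z)) ∧
    (∀ x y z : L, (2 : ℂ) • m z ⁅x, y⁆ = ⁅m z x, y⁆ + ⁅x, m z y⁆) := by
  have hL : IsG1n1Table ℂ n e := ⟨htab⟩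
  have hm : IsTP3Mul n e α β₁ β₂ m := ⟨hcomm, m11, m12, m13, m1j, m1n1, m22, mz, m1n⟩
  have one_le (i : Fin n) : 1 ≤ i.1 + 1 := i.1.succ_pos
  have le_n (i : Fin n) : i.1 + 1 ≤ n := i.isLt
  refine ⟨hcomm, m.assoc_of_basis b fun i j k => ?_, m.transposedPoisson_of_basis b fun i j k => ?_⟩
  · simp only [← hb]
    exact hm.mul_assoc_basis (by omega) (one_le i) (le_n i) (one_le j) (le_n j) (one_le k) (le_n k)
  · simp only [← hb]
    exact hm.transposedPoisson_basis hL hodd (by omega) (one_le k) (le_n k) (one_le i) (le_n i)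
      (one_le j) (le_n j)
end

section
/- Let g = g^2_{(6,1)} be the 6-dimensional complex Lie algebra with nonzero brackets [e_1,e_i]=e_{i+1} (2≤i≤4), [e_2,e_6]=e_4, [e_3,e_6]=e_5. Define a commutative multiplication · on g by e_1·e_1 = α_3 e_4 + α_4 e_5, e_1·e_2 = α_6 e_4 + α_7 e_5, e_1·e_3 = (1/2)α_6 e_5, e_1·e_6 = α_8 e_5, e_2·e_2 = α_9 e_4 + α_{10} e_5, e_2·e_3 = (1/2)α_9 e_5, e_2·e_6 = α_{11} e_5, e_6·e_6 = α_{12} e_5, all other products of basis elements zero. Then (g, ·, [-,-]) is a transposed Poisson algebra for all choices of the scalars α_3, α_4, α_6,…,α_{12}. -/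
/-!
All products lie in `span {e₄, e₅}`, and the product annihilates `e₄` and `e₅`, so every triple
product vanishes and commutativity gives associativity. The transposed Poisson identity says that
every multiplication operator `z · -` is a ½-derivation. The ½-derivations form a subspace and
their defining identity is bilinear and antisymmetric, so it suffices to check it for `z = e_k`,
`x = e_i`, `y = e_j` with `i < j`, which is a finite computation with the structure constants.
-/

open Submodule

namespace Module.Basis

variable {ι κ R M N P : Type*} [CommRing R] [AddCommGroup M] [Module R M]
  [AddCommGroup N] [Module R N] [AddCommGroup P] [Module R P]

theorem apply_mem_of_forall_apply_basis_mem (b : Basis ι R M) (f : M →ₗ[R] N)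
    {S : Submodule R N} (h : ∀ i, f (b i) ∈ S) (x : M) : f x ∈ S :=
  have hle : span R (Set.range b) ≤ S.comap f := span_le.mpr (Set.range_subset_iff.mpr h)
  hle (b.mem_span x)

theorem apply₂_mem_of_forall_apply₂_basis_mem (b₁ : Basis ι R M) (b₂ : Basis κ R N)
    (B : M →ₗ[R] N →ₗ[R] P) {S : Submodule R P} (h : ∀ i j, B (b₁ i) (b₂ j) ∈ S) (x : M) (y : N) :
    B x y ∈ S :=
  show B.flip y x ∈ S from b₁.apply_mem_of_forall_apply_basis_mem (B.flip y)
    (fun i => b₂.apply_mem_of_forall_apply_basis_mem (B (b₁ i)) (h i) y) x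

end Module.Basis

theorem LinearMap.assoc_of_comm_of_mul_mem_of_mul_eq_zero {R M : Type*} [CommRing R]
    [AddCommGroup M] [Module R M] (m : M →ₗ[R] M →ₗ[R] M) (hcomm : ∀ x y, m x y = m y x)
    (N : Submodule R M) (hmem : ∀ x y, m x y ∈ N) (hann : ∀ x, ∀ n ∈ N, m x n = 0) (x y z : M) :
    m (m x y) z = m x (m y z) := by
  rw [hcomm, hann z _ (hmem x y), hann x _ (hmem y z)]

section HalfDerivation

variable {R L : Type*} [CommRing R] [LieRing L] [LieAlgebra R L]

variable (R L) in
def IsHalfDerivation (φ : Module.End R L) : Prop :=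
  ∀ x y : L, (2 : R) • φ ⁅x, y⁆ = ⁅φ x, y⁆ + ⁅x, φ y⁆

variable (R L) in
def halfDerivations : Submodule R (Module.End R L) where
  carrier := {φ | IsHalfDerivation R L φ}
  zero_mem' x y := by simp
  add_mem' {φ ψ} hφ hψ x y := by
    simp only [LinearMap.add_apply, smul_add, hφ x y, hψ x y, add_lie, lie_add]
    abel
  smul_mem' c φ hφ x y := by
    simp only [LinearMap.smul_apply, smul_comm (2 : R) c, hφ x y, smul_add, smul_lie, lie_smul]

def halfDerivationDefect (φ : Module.End R L) : L →ₗ[R] L →ₗ[R] L :=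
  LinearMap.mk₂ R (fun x y => (2 : R) • φ ⁅x, y⁆ - ⁅φ x, y⁆ - ⁅x, φ y⁆)
    (fun x x' y => by simp only [add_lie, map_add, smul_add]; abel)
    (fun c x y => by simp only [smul_lie, map_smul, smul_sub, smul_comm (2 : R) c])
    (fun x y y' => by simp only [lie_add, map_add, smul_add]; abel)
    (fun c x y => by simp only [lie_smul, map_smul, smul_sub, smul_comm (2 : R) c])

theorem halfDerivationDefect_swap (φ : Module.End R L) (x y : L) :
    halfDerivationDefect φ y x = -halfDerivationDefect φ x y := by
  simp only [halfDerivationDefect, LinearMap.mk₂_apply, ← lie_skew x y, ← lie_skew (φ x) y,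
    ← lie_skew x (φ y), map_neg, smul_neg]
  abel

theorem halfDerivationDefect_self (φ : Module.End R L) (x : L) :
    halfDerivationDefect φ x x = 0 := by
  simp only [halfDerivationDefect, LinearMap.mk₂_apply, lie_self, map_zero, smul_zero, zero_sub,
    ← lie_skew x (φ x), sub_neg_eq_add, neg_add_cancel]

theorem isHalfDerivation_iff_halfDerivationDefect_eq_zero (φ : Module.End R L) :
    IsHalfDerivation R L φ ↔ halfDerivationDefect φ = 0 := by
  simp only [IsHalfDerivation, LinearMap.ext_iff₂, halfDerivationDefect, LinearMap.mk₂_apply,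
    LinearMap.zero_apply, sub_sub, sub_eq_zero]

theorem isHalfDerivation_of_basis {ι : Type*} [LinearOrder ι] (b : Module.Basis ι R L)
    {φ : Module.End R L}
    (h : ∀ i j, i < j → (2 : R) • φ ⁅b i, b j⁆ = ⁅φ (b i), b j⁆ + ⁅b i, φ (b j)⁆) :
    IsHalfDerivation R L φ := by
  rw [isHalfDerivation_iff_halfDerivationDefect_eq_zero]
  refine LinearMap.ext_basis b b fun i j => ?_
  have hlt : ∀ i j, i < j → halfDerivationDefect φ (b i) (b j) = 0 := fun i j hij => by
    simp [halfDerivationDefect, h i j hij, sub_sub]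
  rcases lt_trichotomy i j with hij | rfl | hji
  · exact hlt i j hij
  · exact halfDerivationDefect_self φ (b i)
  · rw [halfDerivationDefect_swap, hlt j i hji, neg_zero]
    rfl

end HalfDerivation

/-- The multiplication TP_3(g^2_{(6,1)}) makes g^2_{(6,1)} a transposed Poisson algebra. -/
theorem tp3_g261
    (L : Type*) [LieRing L] [LieAlgebra ℂ L]
    (e : ℕ → L) (b : Module.Basis (Fin 6) ℂ L)
    (hb : ∀ i : Fin 6, e (i.1 + 1) = b i)
    (h12 : ⁅e 1, e 2⁆ = e 3) (h13 : ⁅e 1, e 3⁆ = e 4) (h14 : ⁅e 1, e 4⁆ = e 5)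
    (h26 : ⁅e 2, e 6⁆ = e 4) (h36 : ⁅e 3, e 6⁆ = e 5)
    (hz : ∀ i j : ℕ, 1 ≤ i → i < j → j ≤ 6 →
      ((i, j) ∉ ({(1, 2), (1, 3), (1, 4), (2, 6), (3, 6)} : Set (ℕ × ℕ))) →
        ⁅e i, e j⁆ = 0)
    (α₃ α₄ α₆ α₇ α₈ α₉ α₁₀ α₁₁ α₁₂ : ℂ)
    (m : L →ₗ[ℂ] L →ₗ[ℂ] L)
    (hcomm : ∀ x y : L, m x y = m y x)
    (m11 : m (e 1) (e 1) = α₃ • e 4 + α₄ • e 5)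
    (m12 : m (e 1) (e 2) = α₆ • e 4 + α₇ • e 5)
    (m13 : m (e 1) (e 3) = ((1 / 2 : ℂ) * α₆) • e 5)
    (m16 : m (e 1) (e 6) = α₈ • e 5)
    (m22 : m (e 2) (e 2) = α₉ • e 4 + α₁₀ • e 5)
    (m23 : m (e 2) (e 3) = ((1 / 2 : ℂ) * α₉) • e 5)
    (m26 : m (e 2) (e 6) = α₁₁ • e 5)
    (m66 : m (e 6) (e 6) = α₁₂ • e 5)
    (mz : ∀ i j : ℕ, 1 ≤ i → i ≤ j → j ≤ 6 →
      ((i, j) ∉ ({(1, 1), (1, 2), (1, 3), (1, 6), (2, 2), (2, 3), (2, 6), (6, 6)}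
        : Set (ℕ × ℕ))) → m (e i) (e j) = 0) :
    (∀ x y : L, m x y = m y x) ∧
    (∀ x y z : L, m (m x y) z = m x (m y z)) ∧
    (∀ x y z : L, (2 : ℂ) • m z ⁅x, y⁆ = ⁅m z x, y⁆ + ⁅x, m z y⁆) := by
  have hb' : ∀ i : Fin 6, b i = e (i.1 + 1) := fun i => (hb i).symm
  have lie_swap : ∀ i j, j < i → ⁅e i, e j⁆ = -⁅e j, e i⁆ := fun i j _ => (lie_skew _ _).symm
  have mul_swap : ∀ i j, j < i → m (e i) (e j) = m (e j) (e i) := fun i j _ => hcomm _ _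
  have mul_e4 : m (e 4) = 0 := b.ext fun i => by
    rw [hb']; fin_cases i <;> simp [mul_swap, mz]
  have mul_e5 : m (e 5) = 0 := b.ext fun i => by
    rw [hb']; fin_cases i <;> simp [mul_swap, mz]
  set N := span ℂ {e 4, e 5}
  have h4 : e 4 ∈ N := subset_span (by simp)
  have h5 : e 5 ∈ N := subset_span (by simp)
  have mul_mem : ∀ x y, m x y ∈ N := b.apply₂_mem_of_forall_apply₂_basis_mem b m fun i j => by
    simp only [hb']
    fin_cases i <;> fin_cases j <;>
      simp [mul_swap, mz, m11, m12, m13, m16, m22, m23, m26, m66, h4, h5, N.smul_mem, N.add_mem]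
  have mul_ann : ∀ x, ∀ n ∈ N, m x n = 0 := fun x n hn =>
    have hle : N ≤ LinearMap.ker (m x) := span_le.mpr <| by
      simp [Set.insert_subset_iff, hcomm x, mul_e4, mul_e5]
    hle hn
  refine ⟨hcomm, m.assoc_of_comm_of_mul_mem_of_mul_eq_zero hcomm N mul_mem mul_ann, fun x y z => ?_⟩
  refine b.apply_mem_of_forall_apply_basis_mem m (S := halfDerivations ℂ L) (fun k => ?_) z x y
  refine isHalfDerivation_of_basis b fun i j hij => ?_
  obtain ⟨k, hk⟩ := k; obtain ⟨i, hi⟩ := i; obtain ⟨j, hj⟩ := j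
  rw [Fin.mk_lt_mk] at hij
  simp only [hb']
  -- the `Nat.reduce*`, `Set.mem_*` and logic lemmas discharge the side conditions of `hz` and `mz`
  interval_cases k <;> interval_cases i <;> interval_cases j <;>
    simp only [Nat.reduceAdd, lie_swap, hz, h12, h13, h14, h26, h36, mul_swap, mz, m11, m12, m13,
      m16, m22, m23, m26, m66, lie_self, map_zero, add_lie, lie_add, smul_lie, lie_smul, zero_lie,
      lie_zero, Nat.reduceLeDiff, Nat.reduceLT, Nat.reduceEqDiff, Set.mem_insert_iff,
      Set.mem_singleton_iff, Prod.mk.injEq, and_false, and_true, or_false, not_false_eq_true] <;>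
      module
end
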